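/- arXiv:2105.09080 — 5 statements merged into one kernel-verified Lean document; each statement's English description precedes it below -/
import Mathlib

section
/- (Descent lemma, convex case.) Under the stated assumptions (L-smoothness, gradient-noise conditions, mixing matrix conditions, and convexity of each f_i), if the step-size satisfies γ < 1/(4L), then for every k = 1, 2, … the Gossip-PGA iterates satisfy E‖x̄^{(k)} − x*‖² ≤ E‖x̄^{(k−1)} − x*‖² − γ·(E f(x̄^{(k−1)}) − f(x*)) + (3·L·γ/(2n))·E‖X^{(k−1)} − X̄^{(k−1)}‖_F² + γ²·σ²/n. -/
open MeasureTheory Finset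
open scoped RealInnerProductSpace

/-!
Since `W` is column stochastic, gossip and global averaging both preserve the sum over the
nodes, so the network average takes the step `x̄ ↦ x̄ - γ (D + ξ̄)`, where `D` averages the local
gradients `∇fᵢ(xᵢ)` and `ξ̄` the gradient noise. The noise is conditionally centred given `ℱ k`
while `x̄ - x* - γ D` is `ℱ k`-measurable, so the cross term vanishes in expectation and the
noise only adds `γ² E‖ξ̄‖² ≤ γ² σ² / n` (the noises of different nodes being conditionally
orthogonal). For the exact part, smoothness and convexity give the three-point inequality
`⟪x̄ - x*, D⟫ ≥ f(x̄) - f(x*) - (L/2n) Σ‖xᵢ - x̄‖²`, and comparing `D` with `∇f(x̄)` gives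
`‖D‖² ≤ 4L (f(x̄) - f(x*)) + (2L²/n) Σ‖xᵢ - x̄‖²`; the condition `4γL ≤ 1` absorbs the `γ²` terms.
-/

section Gradient

variable {F : Type*} [NormedAddCommGroup F] [InnerProductSpace ℝ F] [CompleteSpace F]
  {φ : F → ℝ} {G : F → F} {L : ℝ}

open AffineMap in
lemma HasGradientAt.hasDerivAt_comp_lineMap {z y g : F} {t : ℝ}
    (h : HasGradientAt φ g (lineMap z y t)) :
    HasDerivAt (fun s => φ (lineMap z y s)) ⟪g, y - z⟫ t := by
  simpa [Function.comp_def, InnerProductSpace.toDual_apply_apply] using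
    h.hasFDerivAt.comp_hasDerivAt t hasDerivAt_lineMap

open AffineMap in
lemma ConvexOn.add_inner_le_of_hasGradientAt (hφ : ConvexOn ℝ Set.univ φ) {z g : F}
    (hg : HasGradientAt φ g z) (y : F) :
    φ z + ⟪g, y - z⟫ ≤ φ y := by
  have hline : ConvexOn ℝ Set.univ (fun s : ℝ => φ (lineMap z y s)) :=
    hφ.comp_affineMap (lineMap z y)
  have hd : HasDerivAt (fun s : ℝ => φ (lineMap z y s)) ⟪g, y - z⟫ 0 :=
    HasGradientAt.hasDerivAt_comp_lineMap (by simpa using hg)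
  have := hline.le_slope_of_hasDerivAt (Set.mem_univ 0) (Set.mem_univ 1) zero_lt_one hd
  simp only [slope_def_field, lineMap_apply_one, lineMap_apply_zero, sub_zero, div_one] at this
  linarith

open AffineMap in
lemma le_add_inner_add_of_gradient_lipschitz (hφ : ∀ z, HasGradientAt φ (G z) z)
    (hG : ∀ y z, ‖G y - G z‖ ≤ L * ‖y - z‖) (z y : F) :
    φ y ≤ φ z + ⟪G z, y - z⟫ + L / 2 * ‖y - z‖ ^ 2 := by
  set v := y - z
  have hline : ∀ t, HasDerivAt (fun s => φ (lineMap z y s)) ⟪G (lineMap z y t), v⟫ t :=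
    fun t => (hφ _).hasDerivAt_comp_lineMap
  have hquad : ∀ t, HasDerivAt (fun s : ℝ => φ z + s * ⟪G z, v⟫ + L / 2 * s ^ 2 * ‖v‖ ^ 2)
      (⟪G z, v⟫ + L * t * ‖v‖ ^ 2) t := by
    intro t
    refine ((((hasDerivAt_id t).mul_const ⟪G z, v⟫).const_add (φ z)).add
      (((hasDerivAt_pow 2 t).const_mul (L / 2)).mul_const (‖v‖ ^ 2))).congr_deriv ?_
    simp only [one_mul]
    push_cast
    ring
  have hbound : ∀ t ∈ Set.Ico (0 : ℝ) 1, ⟪G (lineMap z y t), v⟫ ≤ ⟪G z, v⟫ + L * t * ‖v‖ ^ 2 := by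
    rintro t ⟨ht, -⟩
    have hdist : lineMap z y t - z = t • v := by simp [lineMap_apply, v]
    calc ⟪G (lineMap z y t), v⟫ = ⟪G z, v⟫ + ⟪G (lineMap z y t) - G z, v⟫ := by
          rw [inner_sub_left]; ring
      _ ≤ ⟪G z, v⟫ + L * ‖lineMap z y t - z‖ * ‖v‖ := by
          gcongr
          exact (real_inner_le_norm _ _).trans (by gcongr; exact hG _ _)
      _ = ⟪G z, v⟫ + L * t * ‖v‖ ^ 2 := by
          rw [hdist, norm_smul, Real.norm_of_nonneg ht]; ring
  have := image_le_of_deriv_right_le_deriv_boundary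
    (fun t _ => (hline t).continuousAt.continuousWithinAt)
    (fun t _ => (hline t).hasDerivWithinAt) (by simp)
    (fun t _ => (hquad t).continuousAt.continuousWithinAt)
    (fun t _ => (hquad t).hasDerivWithinAt) hbound (b := 1) ⟨zero_le_one, le_rfl⟩
  simpa using this

lemma norm_gradient_sq_le_of_isMin (hL : 0 < L) (hφ : ∀ z, HasGradientAt φ (G z) z)
    (hG : ∀ y z, ‖G y - G z‖ ≤ L * ‖y - z‖) {xstar : F} (hmin : ∀ z, φ xstar ≤ φ z) (y : F) :
    ‖G y‖ ^ 2 ≤ 2 * L * (φ y - φ xstar) := by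
  have hstep := le_add_inner_add_of_gradient_lipschitz hφ hG y (y - L⁻¹ • G y)
  simp only [sub_sub_cancel_left, inner_neg_right, inner_smul_right, norm_neg, norm_smul,
    real_inner_self_eq_norm_sq, Real.norm_of_nonneg (inv_nonneg.2 hL.le)] at hstep
  have hquad : L / 2 * (L⁻¹ * ‖G y‖) ^ 2 = L⁻¹ / 2 * ‖G y‖ ^ 2 := by field_simp
  calc ‖G y‖ ^ 2 = 2 * L * (L⁻¹ / 2 * ‖G y‖ ^ 2) := by field_simp
    _ ≤ 2 * L * (φ y - φ xstar) := by
        gcongr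
        linarith [hmin (y - L⁻¹ • G y)]

lemma ConvexOn.sub_le_inner_add_of_gradient_lipschitz (hconv : ConvexOn ℝ Set.univ φ)
    (hφ : ∀ z, HasGradientAt φ (G z) z) (hG : ∀ y z, ‖G y - G z‖ ≤ L * ‖y - z‖) (p y x : F) :
    φ y - φ x ≤ ⟪G p, y - x⟫ + L / 2 * ‖y - p‖ ^ 2 := by
  have hupper := le_add_inner_add_of_gradient_lipschitz hφ hG p y
  have hlower := hconv.add_inner_le_of_hasGradientAt (hφ p) x
  have hsplit : ⟪G p, y - x⟫ = ⟪G p, y - p⟫ - ⟪G p, x - p⟫ := by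
    rw [← inner_sub_right, sub_sub_sub_cancel_right]
  linarith

end Gradient

section Average

variable {ι : Type*}

lemma norm_sum_sq_le_card_mul_sum_norm_sq {E : Type*} [SeminormedAddCommGroup E] (s : Finset ι)
    (v : ι → E) : ‖∑ i ∈ s, v i‖ ^ 2 ≤ #s * ∑ i ∈ s, ‖v i‖ ^ 2 :=
  (pow_le_pow_left₀ (norm_nonneg _) (norm_sum_le s v) 2).trans (sq_sum_le_card_mul_sum_sq)

variable [Fintype ι] {E : Type*} [SeminormedAddCommGroup E] [NormedSpace ℝ E]

lemma norm_inv_card_smul_sum_sq_le (v : ι → E) :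
    ‖(Fintype.card ι : ℝ)⁻¹ • ∑ i, v i‖ ^ 2 ≤ (Fintype.card ι : ℝ)⁻¹ * ∑ i, ‖v i‖ ^ 2 := by
  rcases isEmpty_or_nonempty ι with hι | hι
  · simp
  have hN : (0 : ℝ) < Fintype.card ι := Nat.cast_pos.2 Fintype.card_pos
  rw [norm_smul, mul_pow, Real.norm_of_nonneg (by positivity)]
  calc (Fintype.card ι : ℝ)⁻¹ ^ 2 * ‖∑ i, v i‖ ^ 2
      ≤ (Fintype.card ι : ℝ)⁻¹ ^ 2 * (Fintype.card ι * ∑ i, ‖v i‖ ^ 2) := by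
        gcongr
        exact norm_sum_sq_le_card_mul_sum_norm_sq univ v
    _ = (Fintype.card ι : ℝ)⁻¹ * ∑ i, ‖v i‖ ^ 2 := by field_simp

lemma norm_inv_card_smul_sum_le [Nonempty ι] {v : ι → E} {C : ℝ} (hv : ∀ i, ‖v i‖ ≤ C) :
    ‖(Fintype.card ι : ℝ)⁻¹ • ∑ i, v i‖ ≤ C := by
  have hN : (0 : ℝ) < Fintype.card ι := Nat.cast_pos.2 Fintype.card_pos
  rw [norm_smul, Real.norm_of_nonneg (by positivity)]
  calc (Fintype.card ι : ℝ)⁻¹ * ‖∑ i, v i‖ ≤ (Fintype.card ι : ℝ)⁻¹ * ∑ _i : ι, C := by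
        gcongr
        exact (norm_sum_le _ _).trans (sum_le_sum fun i _ => hv i)
    _ = C := by simp [field]

lemma sum_sum_smul_eq_sum_of_sum_col_eq_one {W : ι → ι → ℝ} (hW : ∀ j, ∑ i, W i j = 1)
    (z : ι → E) : ∑ i, ∑ j, W i j • z j = ∑ j, z j := by
  rw [sum_comm]
  simp_rw [← sum_smul, hW, one_smul]

end Average

section AverageGradient

variable {F : Type*} [NormedAddCommGroup F] [InnerProductSpace ℝ F] [CompleteSpace F]
  {ι : Type*} [Fintype ι] {f : ι → F → ℝ} {grad : ι → F → F} {L : ℝ}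

lemma hasGradientAt_const_mul_sum {g : ι → F} {z : F} (hf : ∀ i, HasGradientAt (f i) (g i) z)
    (c : ℝ) : HasGradientAt (fun w => c * ∑ i, f i w) (c • ∑ i, g i) z := by
  rw [hasGradientAt_iff_hasFDerivAt]
  refine ((HasFDerivAt.fun_sum fun i _ => (hf i).hasFDerivAt).const_mul c).congr_fderiv ?_
  simp [map_sum]

lemma inner_inv_card_smul_sum_gradient_ge (hconv : ∀ i, ConvexOn ℝ Set.univ (f i))
    (hdiff : ∀ i z, HasGradientAt (f i) (grad i z) z)
    (hsmooth : ∀ i y z, ‖grad i y - grad i z‖ ≤ L * ‖y - z‖) (p : ι → F) (y x : F) :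
    (Fintype.card ι : ℝ)⁻¹ * ∑ i, f i y - (Fintype.card ι : ℝ)⁻¹ * ∑ i, f i x
        - L / 2 * ((Fintype.card ι : ℝ)⁻¹ * ∑ i, ‖p i - y‖ ^ 2)
      ≤ ⟪y - x, (Fintype.card ι : ℝ)⁻¹ • ∑ i, grad i (p i)⟫ := by
  have hsum : ∑ i, (f i y - f i x) ≤ ∑ i, (⟪grad i (p i), y - x⟫ + L / 2 * ‖p i - y‖ ^ 2) :=
    sum_le_sum fun i _ => by
      simpa [norm_sub_rev] using
        (hconv i).sub_le_inner_add_of_gradient_lipschitz (hdiff i) (hsmooth i) (p i) y x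
  rw [sum_sub_distrib, sum_add_distrib, ← mul_sum, ← sum_inner] at hsum
  rw [real_inner_smul_right, real_inner_comm]
  have hN : (0 : ℝ) ≤ (Fintype.card ι : ℝ)⁻¹ := by positivity
  linarith [mul_le_mul_of_nonneg_left hsum hN]

lemma norm_inv_card_smul_sum_gradient_sq_le [Nonempty ι] (hL : 0 < L)
    (hdiff : ∀ i z, HasGradientAt (f i) (grad i z) z)
    (hsmooth : ∀ i y z, ‖grad i y - grad i z‖ ≤ L * ‖y - z‖) {xstar : F}
    (hmin : ∀ z, (Fintype.card ι : ℝ)⁻¹ * ∑ i, f i xstar ≤ (Fintype.card ι : ℝ)⁻¹ * ∑ i, f i z)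
    (p : ι → F) (y : F) :
    ‖(Fintype.card ι : ℝ)⁻¹ • ∑ i, grad i (p i)‖ ^ 2
      ≤ 4 * L * ((Fintype.card ι : ℝ)⁻¹ * ∑ i, f i y - (Fintype.card ι : ℝ)⁻¹ * ∑ i, f i xstar)
        + 2 * L ^ 2 * ((Fintype.card ι : ℝ)⁻¹ * ∑ i, ‖p i - y‖ ^ 2) := by
  set N := (Fintype.card ι : ℝ)
  set D := N⁻¹ • ∑ i, grad i (p i)
  have hlip : ∀ a b, ‖N⁻¹ • ∑ i, grad i a - N⁻¹ • ∑ i, grad i b‖ ≤ L * ‖a - b‖ := fun a b => by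
    rw [← smul_sub, ← sum_sub_distrib]
    exact norm_inv_card_smul_sum_le fun i => hsmooth i a b
  have hgrad_y : ‖N⁻¹ • ∑ i, grad i y‖ ^ 2 ≤ 2 * L * (N⁻¹ * ∑ i, f i y - N⁻¹ * ∑ i, f i xstar) :=
    norm_gradient_sq_le_of_isMin hL
      (fun z => hasGradientAt_const_mul_sum (fun i => hdiff i z) N⁻¹) hlip hmin y
  have hdev : ‖D - N⁻¹ • ∑ i, grad i y‖ ^ 2 ≤ L ^ 2 * (N⁻¹ * ∑ i, ‖p i - y‖ ^ 2) := by
    rw [← smul_sub, ← sum_sub_distrib]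
    calc ‖N⁻¹ • ∑ i, (grad i (p i) - grad i y)‖ ^ 2
        ≤ N⁻¹ * ∑ i, ‖grad i (p i) - grad i y‖ ^ 2 := norm_inv_card_smul_sum_sq_le _
      _ ≤ N⁻¹ * ∑ i, (L * ‖p i - y‖) ^ 2 := by
          gcongr with i
          exact hsmooth i (p i) y
      _ = L ^ 2 * (N⁻¹ * ∑ i, ‖p i - y‖ ^ 2) := by simp only [mul_pow, ← mul_sum]; ring
  calc ‖D‖ ^ 2 ≤ (‖N⁻¹ • ∑ i, grad i y‖ + ‖D - N⁻¹ • ∑ i, grad i y‖) ^ 2 := by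
        gcongr
        exact norm_le_norm_add_norm_sub' D _
    _ ≤ 2 * (‖N⁻¹ • ∑ i, grad i y‖ ^ 2 + ‖D - N⁻¹ • ∑ i, grad i y‖ ^ 2) := add_sq_le
    _ ≤ _ := by linarith

lemma norm_sub_smul_inv_card_smul_sum_gradient_sq_le [Nonempty ι] (hL : 0 < L) {γ : ℝ}
    (hγ : 0 ≤ γ) (hγL : 4 * γ * L ≤ 1) (hconv : ∀ i, ConvexOn ℝ Set.univ (f i))
    (hdiff : ∀ i z, HasGradientAt (f i) (grad i z) z)
    (hsmooth : ∀ i y z, ‖grad i y - grad i z‖ ≤ L * ‖y - z‖) {xstar : F}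
    (hmin : ∀ z, (Fintype.card ι : ℝ)⁻¹ * ∑ i, f i xstar ≤ (Fintype.card ι : ℝ)⁻¹ * ∑ i, f i z)
    (p : ι → F) (y : F) :
    ‖y - xstar - γ • (Fintype.card ι : ℝ)⁻¹ • ∑ i, grad i (p i)‖ ^ 2
      ≤ ‖y - xstar‖ ^ 2
        - γ * ((Fintype.card ι : ℝ)⁻¹ * ∑ i, f i y - (Fintype.card ι : ℝ)⁻¹ * ∑ i, f i xstar)
        + 3 / 2 * L * γ * ((Fintype.card ι : ℝ)⁻¹ * ∑ i, ‖p i - y‖ ^ 2) := by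
  set N := (Fintype.card ι : ℝ)
  set t := N⁻¹ * ∑ i, f i y - N⁻¹ * ∑ i, f i xstar
  set u := N⁻¹ * ∑ i, ‖p i - y‖ ^ 2
  have hinner := inner_inv_card_smul_sum_gradient_ge hconv hdiff hsmooth p y xstar
  have hnorm := norm_inv_card_smul_sum_gradient_sq_le hL hdiff hsmooth hmin p y
  have ht : 0 ≤ t := sub_nonneg.2 (hmin y)
  have hu : 0 ≤ u := by positivity
  rw [norm_sub_sq_real, norm_smul, real_inner_smul_right, mul_pow, Real.norm_of_nonneg hγ]
  -- `4γL ≤ 1` absorbs the `γ²` terms: `4γ²L t ≤ γ t` and `2γ²L² u ≤ γL u / 2`.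
  linarith [mul_nonneg (mul_nonneg hγ ht) (sub_nonneg.2 hγL),
    mul_nonneg (mul_nonneg (mul_nonneg hγ hL.le) hu) (sub_nonneg.2 hγL),
    mul_le_mul_of_nonneg_left hinner hγ, mul_le_mul_of_nonneg_left hnorm (sq_nonneg γ)]

end AverageGradient

lemma LipschitzWith.memLp_comp {Ω : Type*} {mΩ : MeasurableSpace Ω} {μ : Measure Ω}
    [IsFiniteMeasure μ] {E E' : Type*} [NormedAddCommGroup E] [NormedAddCommGroup E']
    {K : NNReal} {G : E → E'} (hG : LipschitzWith K G) {X : Ω → E} {p : ENNReal}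
    (hX : MemLp X p μ) : MemLp (fun ω => G (X ω)) p μ := by
  have hshift : MemLp (fun ω => G (X ω) - G 0) p μ :=
    (hG.sub (LipschitzWith.const (G 0))).comp_memLp (by simp) hX
  convert hshift.add (memLp_const (G 0)) using 1
  ext ω
  simp

section Probability

variable {Ω : Type*} {m mΩ : MeasurableSpace Ω} {μ : Measure Ω}

lemma MeasureTheory.MemLp.integrable_norm_sq {E : Type*} [NormedAddCommGroup E] {X : Ω → E}
    (hX : MemLp X 2 μ) : Integrable (fun ω => ‖X ω‖ ^ 2) μ :=
  (memLp_two_iff_integrable_sq_norm hX.aestronglyMeasurable).1 hX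

variable {E : Type*} [NormedAddCommGroup E] [InnerProductSpace ℝ E]

lemma MeasureTheory.MemLp.integrable_inner {X Y : Ω → E} (hX : MemLp X 2 μ) (hY : MemLp Y 2 μ) :
    Integrable (fun ω => ⟪X ω, Y ω⟫) μ :=
  (L2.integrable_inner (𝕜 := ℝ) (hX.toLp X) (hY.toLp Y)).congr <| by
    filter_upwards [hX.coeFn_toLp, hY.coeFn_toLp] with ω hXω hYω
    rw [hXω, hYω]

lemma integral_eq_zero_of_condExp_ae_eq_zero (hm : m ≤ mΩ) [SigmaFinite (μ.trim hm)]
    {X : Ω → ℝ} (hX : μ[X|m] =ᵐ[μ] 0) : ∫ ω, X ω ∂μ = 0 := by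
  rw [← integral_condExp hm, integral_congr_ae hX, Pi.zero_def, integral_zero]

lemma integral_le_of_condExp_ae_le [IsProbabilityMeasure μ] (hm : m ≤ mΩ) {X : Ω → ℝ} {c : ℝ}
    (hX : ∀ᵐ ω ∂μ, μ[X|m] ω ≤ c) : ∫ ω, X ω ∂μ ≤ c := by
  rw [← integral_condExp hm]
  simpa using integral_mono_ae integrable_condExp (integrable_const c) hX

lemma integral_inner_eq_zero_of_condExp_ae_eq_zero [CompleteSpace E] (hm : m ≤ mΩ)
    [SigmaFinite (μ.trim hm)] {Y ξ : Ω → E} (hY : StronglyMeasurable[m] Y)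
    (hYξ : Integrable (fun ω => ⟪Y ω, ξ ω⟫) μ) (hξ : Integrable ξ μ) (hξ0 : μ[ξ|m] =ᵐ[μ] 0) :
    ∫ ω, ⟪Y ω, ξ ω⟫ ∂μ = 0 := by
  refine integral_eq_zero_of_condExp_ae_eq_zero hm ?_
  filter_upwards [condExp_bilin_of_stronglyMeasurable_left (innerSL ℝ) hY hYξ hξ, hξ0]
    with ω hpull hω
  exact hpull.trans (by simp [hω])

lemma integral_norm_sub_smul_sq_of_condExp_ae_eq_zero [CompleteSpace E] [IsFiniteMeasure μ]
    (hm : m ≤ mΩ) {Y ξ : Ω → E} (hYm : StronglyMeasurable[m] Y) (hY : MemLp Y 2 μ)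
    (hξ : MemLp ξ 2 μ) (hξ0 : μ[ξ|m] =ᵐ[μ] 0) (γ : ℝ) :
    ∫ ω, ‖Y ω - γ • ξ ω‖ ^ 2 ∂μ = ∫ ω, ‖Y ω‖ ^ 2 ∂μ + γ ^ 2 * ∫ ω, ‖ξ ω‖ ^ 2 ∂μ := by
  have hinner := hY.integrable_inner hξ
  have hcross := integral_inner_eq_zero_of_condExp_ae_eq_zero hm hYm hinner
    (hξ.integrable one_le_two) hξ0
  have hdrift : Integrable (fun ω => ‖Y ω‖ ^ 2 - 2 * γ * ⟪Y ω, ξ ω⟫) μ :=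
    hY.integrable_norm_sq.sub (hinner.const_mul _)
  have hexpand : ∀ ω, ‖Y ω - γ • ξ ω‖ ^ 2
      = ‖Y ω‖ ^ 2 - 2 * γ * ⟪Y ω, ξ ω⟫ + γ ^ 2 * ‖ξ ω‖ ^ 2 := fun ω => by
    rw [norm_sub_sq_real, real_inner_smul_right, norm_smul, mul_pow, Real.norm_eq_abs, sq_abs]
    ring
  simp_rw [hexpand]
  rw [integral_add hdrift (hξ.integrable_norm_sq.const_mul _),
    integral_sub hY.integrable_norm_sq (hinner.const_mul _), integral_const_mul,
    integral_const_mul, hcross]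
  ring

lemma integral_norm_sum_sq_of_orthogonal {ι : Type*} [Fintype ι] {ξ : ι → Ω → E}
    (hξ : ∀ i, MemLp (ξ i) 2 μ) (horth : ∀ i j, i ≠ j → ∫ ω, ⟪ξ i ω, ξ j ω⟫ ∂μ = 0) :
    ∫ ω, ‖∑ i, ξ i ω‖ ^ 2 ∂μ = ∑ i, ∫ ω, ‖ξ i ω‖ ^ 2 ∂μ := by
  have hexpand : ∀ ω, ‖∑ i, ξ i ω‖ ^ 2 = ∑ i, ∑ j, ⟪ξ i ω, ξ j ω⟫ := fun ω => by
    simp_rw [← real_inner_self_eq_norm_sq, sum_inner, inner_sum]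
  simp_rw [hexpand]
  rw [integral_finsetSum _ fun i _ => integrable_finsetSum _ fun j _ =>
    (hξ i).integrable_inner (hξ j)]
  refine sum_congr rfl fun i _ => ?_
  rw [integral_finsetSum _ fun j _ => (hξ i).integrable_inner (hξ j),
    sum_eq_single i (fun j _ hji => horth i j hji.symm) (by simp)]
  simp_rw [real_inner_self_eq_norm_sq]

lemma integral_norm_inv_card_smul_sum_sq_le [IsProbabilityMeasure μ] (hm : m ≤ mΩ)
    {ι : Type*} [Fintype ι] {ξ : ι → Ω → E} {C : ℝ} (hξ : ∀ i, MemLp (ξ i) 2 μ)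
    (hvar : ∀ i, ∀ᵐ ω ∂μ, μ[fun ω => ‖ξ i ω‖ ^ 2|m] ω ≤ C)
    (horth : ∀ i j, i ≠ j → μ[fun ω => ⟪ξ i ω, ξ j ω⟫|m] =ᵐ[μ] 0) :
    ∫ ω, ‖(Fintype.card ι : ℝ)⁻¹ • ∑ i, ξ i ω‖ ^ 2 ∂μ ≤ C / Fintype.card ι := by
  rcases isEmpty_or_nonempty ι with hι | hι
  · simp
  have hN : (0 : ℝ) < Fintype.card ι := Nat.cast_pos.2 Fintype.card_pos
  simp_rw [norm_smul, mul_pow, Real.norm_of_nonneg (inv_nonneg.2 hN.le)]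
  rw [integral_const_mul, integral_norm_sum_sq_of_orthogonal hξ
    fun i j hij => integral_eq_zero_of_condExp_ae_eq_zero hm (horth i j hij)]
  calc (Fintype.card ι : ℝ)⁻¹ ^ 2 * ∑ i, ∫ ω, ‖ξ i ω‖ ^ 2 ∂μ
      ≤ (Fintype.card ι : ℝ)⁻¹ ^ 2 * ∑ _i : ι, C := by
        gcongr with i
        exact integral_le_of_condExp_ae_le hm (hvar i)
    _ = C / Fintype.card ι := by simp [field]

lemma condExp_smul_sum_ae_eq_zero [CompleteSpace E] {ι : Type*} [Fintype ι] {ξ : ι → Ω → E}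
    (hξ : ∀ i, Integrable (ξ i) μ) (hξ0 : ∀ i, μ[ξ i|m] =ᵐ[μ] 0) (c : ℝ) :
    μ[fun ω => c • ∑ i, ξ i ω|m] =ᵐ[μ] 0 := by
  have hsum : μ[∑ i, ξ i|m] =ᵐ[μ] 0 := by
    refine (condExp_finsetSum (fun i _ => hξ i) m).trans ?_
    filter_upwards [ae_all_iff.2 hξ0] with ω hω
    simp [Finset.sum_apply, hω]
  have hfun : (fun ω => c • ∑ i, ξ i ω) = c • ∑ i, ξ i := by
    ext ω
    simp [Finset.sum_apply]
  rw [hfun]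
  filter_upwards [condExp_smul c (∑ i, ξ i) m, hsum] with ω hsmul hω
  simp [hsmul, hω]

end Probability

section GradientStep

variable {Ω : Type*} {m mΩ : MeasurableSpace Ω} {μ : Measure Ω}
  {F : Type*} [NormedAddCommGroup F] [InnerProductSpace ℝ F] [CompleteSpace F]
  {ι : Type*} [Fintype ι] {f : ι → F → ℝ} {grad : ι → F → F} {L γ : ℝ}

lemma integral_norm_sub_smul_inv_card_smul_sum_gradient_sq_le [IsProbabilityMeasure μ]
    [Nonempty ι] (hL : 0 < L) (hγ : 0 ≤ γ) (hγL : 4 * γ * L ≤ 1)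
    (hconv : ∀ i, ConvexOn ℝ Set.univ (f i)) (hdiff : ∀ i z, HasGradientAt (f i) (grad i z) z)
    (hsmooth : ∀ i y z, ‖grad i y - grad i z‖ ≤ L * ‖y - z‖) {xstar : F}
    (hmin : ∀ z, (Fintype.card ι : ℝ)⁻¹ * ∑ i, f i xstar ≤ (Fintype.card ι : ℝ)⁻¹ * ∑ i, f i z)
    {p : ι → Ω → F} {y : Ω → F} (hp : ∀ i, MemLp (p i) 2 μ) (hy : MemLp y 2 μ)
    (hfy : Integrable (fun ω => (Fintype.card ι : ℝ)⁻¹ * ∑ i, f i (y ω)) μ) :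
    ∫ ω, ‖y ω - xstar - γ • (Fintype.card ι : ℝ)⁻¹ • ∑ i, grad i (p i ω)‖ ^ 2 ∂μ
      ≤ ∫ ω, ‖y ω - xstar‖ ^ 2 ∂μ
        - γ * (∫ ω, (Fintype.card ι : ℝ)⁻¹ * ∑ i, f i (y ω) ∂μ
          - (Fintype.card ι : ℝ)⁻¹ * ∑ i, f i xstar)
        + 3 * L * γ / (2 * Fintype.card ι) * ∫ ω, ∑ i, ‖p i ω - y ω‖ ^ 2 ∂μ := by
  set N := (Fintype.card ι : ℝ)
  have hdist : Integrable (fun ω => ‖y ω - xstar‖ ^ 2) μ :=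
    (hy.sub (memLp_const xstar)).integrable_norm_sq
  have hgap : Integrable (fun ω => N⁻¹ * ∑ i, f i (y ω) - N⁻¹ * ∑ i, f i xstar) μ :=
    hfy.sub (integrable_const _)
  have hspread : Integrable (fun ω => ∑ i, ‖p i ω - y ω‖ ^ 2) μ :=
    integrable_finsetSum _ fun i _ => ((hp i).sub hy).integrable_norm_sq
  have hdescent : Integrable (fun ω => ‖y ω - xstar‖ ^ 2
      - γ * (N⁻¹ * ∑ i, f i (y ω) - N⁻¹ * ∑ i, f i xstar)) μ := hdist.sub (hgap.const_mul γ)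
  have hpoint : ∀ ω, ‖y ω - xstar - γ • N⁻¹ • ∑ i, grad i (p i ω)‖ ^ 2
      ≤ ‖y ω - xstar‖ ^ 2 - γ * (N⁻¹ * ∑ i, f i (y ω) - N⁻¹ * ∑ i, f i xstar)
        + 3 * L * γ / (2 * N) * ∑ i, ‖p i ω - y ω‖ ^ 2 := fun ω => by
    have := norm_sub_smul_inv_card_smul_sum_gradient_sq_le hL hγ hγL hconv hdiff hsmooth hmin
      (fun i => p i ω) (y ω)
    convert this using 2
    ring
  calc _ ≤ ∫ ω, (‖y ω - xstar‖ ^ 2 - γ * (N⁻¹ * ∑ i, f i (y ω) - N⁻¹ * ∑ i, f i xstar)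
        + 3 * L * γ / (2 * N) * ∑ i, ‖p i ω - y ω‖ ^ 2) ∂μ :=
        integral_mono_of_nonneg (ae_of_all _ fun ω => sq_nonneg _)
          ((hdescent.add (hspread.const_mul _))) (ae_of_all _ hpoint)
    _ = _ := by
        rw [integral_add hdescent (hspread.const_mul _),
          integral_sub hdist (hgap.const_mul γ), integral_const_mul, integral_const_mul,
          integral_sub hfy (integrable_const _), integral_const, probReal_univ, one_smul]

lemma integral_norm_inv_card_smul_sum_sub_smul_sub_sq_le [IsProbabilityMeasure μ] [Nonempty ι]
    (hm : m ≤ mΩ) (hL : 0 < L) (hγ : 0 ≤ γ) (hγL : 4 * γ * L ≤ 1)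
    (hconv : ∀ i, ConvexOn ℝ Set.univ (f i)) (hdiff : ∀ i z, HasGradientAt (f i) (grad i z) z)
    (hsmooth : ∀ i y z, ‖grad i y - grad i z‖ ≤ L * ‖y - z‖) {xstar : F}
    (hmin : ∀ z, (Fintype.card ι : ℝ)⁻¹ * ∑ i, f i xstar ≤ (Fintype.card ι : ℝ)⁻¹ * ∑ i, f i z)
    {x g : ι → Ω → F} {C : ℝ} (hx_meas : ∀ i, StronglyMeasurable[m] (x i))
    (hx : ∀ i, MemLp (x i) 2 μ) (hg : ∀ i, MemLp (g i) 2 μ)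
    (hmean : ∀ i, μ[fun ω => g i ω - grad i (x i ω)|m] =ᵐ[μ] 0)
    (hvar : ∀ i, ∀ᵐ ω ∂μ, μ[fun ω => ‖g i ω - grad i (x i ω)‖ ^ 2|m] ω ≤ C)
    (hindep : ∀ i j, i ≠ j →
      μ[fun ω => ⟪g i ω - grad i (x i ω), g j ω - grad j (x j ω)⟫|m] =ᵐ[μ] 0)
    (hfx : Integrable
      (fun ω => (Fintype.card ι : ℝ)⁻¹ * ∑ i, f i ((Fintype.card ι : ℝ)⁻¹ • ∑ j, x j ω)) μ) :
    ∫ ω, ‖(Fintype.card ι : ℝ)⁻¹ • ∑ i, (x i ω - γ • g i ω) - xstar‖ ^ 2 ∂μ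
      ≤ ∫ ω, ‖(Fintype.card ι : ℝ)⁻¹ • ∑ i, x i ω - xstar‖ ^ 2 ∂μ
        - γ * (∫ ω, (Fintype.card ι : ℝ)⁻¹ * ∑ i, f i ((Fintype.card ι : ℝ)⁻¹ • ∑ j, x j ω) ∂μ
          - (Fintype.card ι : ℝ)⁻¹ * ∑ i, f i xstar)
        + 3 * L * γ / (2 * Fintype.card ι)
          * ∫ ω, ∑ i, ‖x i ω - (Fintype.card ι : ℝ)⁻¹ • ∑ j, x j ω‖ ^ 2 ∂μ
        + γ ^ 2 * C / Fintype.card ι := by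
  set N := (Fintype.card ι : ℝ)
  set ξ : ι → Ω → F := fun i ω => g i ω - grad i (x i ω)
  have hlip : ∀ i, LipschitzWith L.toNNReal (grad i) := fun i =>
    LipschitzWith.of_dist_le_mul fun a b => by
      simpa [dist_eq_norm, Real.coe_toNNReal _ hL.le] using hsmooth i a b
  have hgradx : ∀ i, MemLp (fun ω => grad i (x i ω)) 2 μ := fun i => (hlip i).memLp_comp (hx i)
  have hξ : ∀ i, MemLp (ξ i) 2 μ := fun i => (hg i).sub (hgradx i)
  have hxbar : MemLp (fun ω => N⁻¹ • ∑ i, x i ω) 2 μ :=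
    (memLp_finsetSum _ fun i _ => hx i).const_smul N⁻¹
  have hY : MemLp (fun ω => N⁻¹ • ∑ i, x i ω - xstar - γ • N⁻¹ • ∑ i, grad i (x i ω)) 2 μ :=
    (hxbar.sub (memLp_const xstar)).sub
      (((memLp_finsetSum _ fun i _ => hgradx i).const_smul N⁻¹).const_smul γ)
  have hYm : StronglyMeasurable[m]
      (fun ω => N⁻¹ • ∑ i, x i ω - xstar - γ • N⁻¹ • ∑ i, grad i (x i ω)) :=
    (((Finset.stronglyMeasurable_fun_sum _ fun i _ => hx_meas i).const_smul N⁻¹).sub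
      stronglyMeasurable_const).sub (((Finset.stronglyMeasurable_fun_sum _ fun i _ =>
        (hlip i).continuous.comp_stronglyMeasurable (hx_meas i)).const_smul N⁻¹).const_smul γ)
  have hsplit : ∀ ω, N⁻¹ • ∑ i, (x i ω - γ • g i ω) - xstar
      = (N⁻¹ • ∑ i, x i ω - xstar - γ • N⁻¹ • ∑ i, grad i (x i ω))
        - γ • N⁻¹ • ∑ i, ξ i ω := fun ω => by
    simp only [ξ, sum_sub_distrib, ← smul_sum, smul_sub, smul_comm γ N⁻¹]
    abel
  have hξbar : MemLp (fun ω => N⁻¹ • ∑ i, ξ i ω) 2 μ :=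
    (memLp_finsetSum _ fun i _ => hξ i).const_smul N⁻¹
  simp_rw [hsplit]
  rw [integral_norm_sub_smul_sq_of_condExp_ae_eq_zero hm hYm hY hξbar
    (condExp_smul_sum_ae_eq_zero (fun i => (hξ i).integrable one_le_two) hmean N⁻¹) γ]
  have hdrift := integral_norm_sub_smul_inv_card_smul_sum_gradient_sq_le hL hγ hγL hconv hdiff
    hsmooth hmin hx hxbar hfx
  have hnoise := integral_norm_inv_card_smul_sum_sq_le hm hξ hvar hindep
  have := mul_le_mul_of_nonneg_left hnoise (sq_nonneg γ)
  rw [← mul_div_assoc] at this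
  simp only [N] at *
  linarith

end GradientStep

theorem gossip_pga_descent_lemma_convex_general
    {Ω : Type*} [mΩ : MeasurableSpace Ω] (μ : Measure Ω) [IsProbabilityMeasure μ]
    (d n : ℕ) (hn : 0 < n)
    (f : Fin n → EuclideanSpace ℝ (Fin d) → ℝ)
    (grad : Fin n → EuclideanSpace ℝ (Fin d) → EuclideanSpace ℝ (Fin d))
    (L σ γ : ℝ) (H : ℕ)
    (hL : 0 < L) (hγ0 : 0 < γ)
    -- smoothness and convexity
    (hdiff : ∀ i z, HasGradientAt (f i) (grad i z) z)
    (hsmooth : ∀ i y z, ‖grad i y - grad i z‖ ≤ L * ‖y - z‖)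
    (hconv : ∀ i, ConvexOn ℝ Set.univ (f i))
    (xstar : EuclideanSpace ℝ (Fin d))
    (hmin : ∀ z, (n : ℝ)⁻¹ * ∑ i, f i xstar ≤ (n : ℝ)⁻¹ * ∑ i, f i z)
    -- mixing matrix assumptions
    (W : Matrix (Fin n) (Fin n) ℝ)
    (hWcol : ∀ j, ∑ i, W i j = 1)
    -- the stochastic process: iterates and stochastic gradients, with their filtration
    (ℱ : ℕ → MeasurableSpace Ω) (hℱle : ∀ k, ℱ k ≤ mΩ)
    (x g : ℕ → Fin n → Ω → EuclideanSpace ℝ (Fin d))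
    (hx_adapted : ∀ k i, StronglyMeasurable[ℱ k] (x k i))
    (hx_L2 : ∀ k i, MemLp (x k i) 2 μ)
    (hg_L2 : ∀ k i, MemLp (g k i) 2 μ)
    -- gradient-noise assumptions
    (hmean : ∀ k i, μ[fun ω => g k i ω - grad i (x k i ω) | ℱ k] =ᵐ[μ] 0)
    (hvar : ∀ k i, ∀ᵐ ω ∂μ,
      (μ[fun ω => ‖g k i ω - grad i (x k i ω)‖ ^ 2 | ℱ k]) ω ≤ σ ^ 2)
    (hindep : ∀ k, ∀ i j, i ≠ j →
      μ[fun ω => ⟪g k i ω - grad i (x k i ω), g k j ω - grad j (x k j ω)⟫ | ℱ k]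
        =ᵐ[μ] 0)
    -- the Gossip-PGA recursion with averaging period `H`
    (hrec_gossip : ∀ k i ω, (k + 1) % H ≠ 0 →
      x (k + 1) i ω = ∑ j, W i j • (x k j ω - γ • g k j ω))
    (hrec_avg : ∀ k i ω, (k + 1) % H = 0 →
      x (k + 1) i ω = (n : ℝ)⁻¹ • ∑ j, (x k j ω - γ • g k j ω))
    -- integrability of the function values
    (hfint : ∀ k, Integrable
      (fun ω => (n : ℝ)⁻¹ * ∑ i, f i ((n : ℝ)⁻¹ • ∑ j, x k j ω)) μ)
    -- step-size condition
    (hγ : γ < 1 / (4 * L)) :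
    ∀ k : ℕ,
      (∫ ω, ‖(n : ℝ)⁻¹ • (∑ i, x (k + 1) i ω) - xstar‖ ^ 2 ∂μ) ≤
        (∫ ω, ‖(n : ℝ)⁻¹ • (∑ i, x k i ω) - xstar‖ ^ 2 ∂μ)
        - γ * ((∫ ω, (n : ℝ)⁻¹ * ∑ i, f i ((n : ℝ)⁻¹ • ∑ j, x k j ω) ∂μ)
            - (n : ℝ)⁻¹ * ∑ i, f i xstar)
        + 3 * L * γ / (2 * n)
            * (∫ ω, (∑ i, ‖x k i ω - (n : ℝ)⁻¹ • ∑ j, x k j ω‖ ^ 2) ∂μ)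
        + γ ^ 2 * σ ^ 2 / n := by
  intro k
  have : Nonempty (Fin n) := ⟨⟨0, hn⟩⟩
  have hγL : 4 * γ * L ≤ 1 := by
    rw [lt_div_iff₀ (by positivity)] at hγ
    linarith
  have hsum : ∀ ω, ∑ i, x (k + 1) i ω = ∑ i, (x k i ω - γ • g k i ω) := fun ω => by
    by_cases hk : (k + 1) % H = 0
    · simp_rw [hrec_avg k _ ω hk, sum_const, card_univ, Fintype.card_fin,
        ← Nat.cast_smul_eq_nsmul ℝ, smul_smul, mul_inv_cancel₀ (Nat.cast_ne_zero.2 hn.ne' : (n : ℝ) ≠ 0), one_smul]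
    · simp_rw [hrec_gossip k _ ω hk]
      exact sum_sum_smul_eq_sum_of_sum_col_eq_one hWcol _
  have hstep := integral_norm_inv_card_smul_sum_sub_smul_sub_sq_le (hℱle k) hL hγ0.le hγL hconv
    hdiff hsmooth (by simpa using hmin) (hx_adapted k) (hx_L2 k) (hg_L2 k) (hmean k) (hvar k)
    (hindep k) (by simpa using hfint k)
  simp only [Fintype.card_fin] at hstep
  simpa only [hsum] using hstep

/-- **Descent lemma for Gossip-PGA, convex case.**
Under `L`-smoothness, convexity of each `fᵢ`, the gradient-noise assumptions and the mixing
matrix assumptions, if the step-size satisfies `γ < 1/(4L)`, then for every `k` the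
Gossip-PGA iterates satisfy
`E‖x̄⁽ᵏ⁺¹⁾ − x*‖² ≤ E‖x̄⁽ᵏ⁾ − x*‖² − γ (E f(x̄⁽ᵏ⁾) − f(x*))
   + (3Lγ/(2n)) E‖X⁽ᵏ⁾ − X̄⁽ᵏ⁾‖_F² + γ²σ²/n`. -/
theorem gossip_pga_descent_lemma_convex
    {Ω : Type*} [mΩ : MeasurableSpace Ω] (μ : Measure Ω) [IsProbabilityMeasure μ]
    (d n : ℕ) (hn : 0 < n)
    (f : Fin n → EuclideanSpace ℝ (Fin d) → ℝ)
    (grad : Fin n → EuclideanSpace ℝ (Fin d) → EuclideanSpace ℝ (Fin d))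
    (L σ β γ : ℝ) (H : ℕ)
    (hL : 0 < L) (hσ : 0 ≤ σ) (hβ0 : 0 < β) (hβ1 : β < 1) (hγ0 : 0 < γ) (hH : 0 < H)
    -- smoothness and convexity
    (hdiff : ∀ i z, HasGradientAt (f i) (grad i z) z)
    (hsmooth : ∀ i y z, ‖grad i y - grad i z‖ ≤ L * ‖y - z‖)
    (hconv : ∀ i, ConvexOn ℝ Set.univ (f i))
    (xstar : EuclideanSpace ℝ (Fin d))
    (hmin : ∀ z, (n : ℝ)⁻¹ * ∑ i, f i xstar ≤ (n : ℝ)⁻¹ * ∑ i, f i z)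
    -- mixing matrix assumptions
    (W : Matrix (Fin n) (Fin n) ℝ)
    (hWpos : ∀ i j, 0 ≤ W i j)
    (hWrow : ∀ i, ∑ j, W i j = 1)
    (hWcol : ∀ j, ∑ i, W i j = 1)
    (hWnull : ∀ v : Fin n → ℝ, (1 - W).mulVec v = 0 → ∃ c : ℝ, v = fun _ => c)
    (hWnorm : ∀ v : Fin n → ℝ,
      Real.sqrt (∑ i, (W.mulVec v i - (∑ j, v j) / n) ^ 2) ≤ β * Real.sqrt (∑ i, v i ^ 2))
    -- the stochastic process: iterates and stochastic gradients, with their filtration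
    (ℱ : ℕ → MeasurableSpace Ω) (hℱle : ∀ k, ℱ k ≤ mΩ) (hℱmono : Monotone ℱ)
    (x g : ℕ → Fin n → Ω → EuclideanSpace ℝ (Fin d))
    (hx_adapted : ∀ k i, StronglyMeasurable[ℱ k] (x k i))
    (hg_adapted : ∀ k i, StronglyMeasurable[ℱ (k + 1)] (g k i))
    (hx_L2 : ∀ k i, MemLp (x k i) 2 μ)
    (hg_L2 : ∀ k i, MemLp (g k i) 2 μ)
    -- all initial values coincide
    (hx0 : ∀ i j ω, x 0 i ω = x 0 j ω)
    -- gradient-noise assumptions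
    (hmean : ∀ k i, μ[fun ω => g k i ω - grad i (x k i ω) | ℱ k] =ᵐ[μ] 0)
    (hvar : ∀ k i, ∀ᵐ ω ∂μ,
      (μ[fun ω => ‖g k i ω - grad i (x k i ω)‖ ^ 2 | ℱ k]) ω ≤ σ ^ 2)
    (hindep : ∀ k, ∀ i j, i ≠ j →
      μ[fun ω => ⟪g k i ω - grad i (x k i ω), g k j ω - grad j (x k j ω)⟫ | ℱ k]
        =ᵐ[μ] 0)
    -- the Gossip-PGA recursion with averaging period `H`
    (hrec_gossip : ∀ k i ω, (k + 1) % H ≠ 0 →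
      x (k + 1) i ω = ∑ j, W i j • (x k j ω - γ • g k j ω))
    (hrec_avg : ∀ k i ω, (k + 1) % H = 0 →
      x (k + 1) i ω = (n : ℝ)⁻¹ • ∑ j, (x k j ω - γ • g k j ω))
    -- integrability of the function values
    (hfint : ∀ k, Integrable
      (fun ω => (n : ℝ)⁻¹ * ∑ i, f i ((n : ℝ)⁻¹ • ∑ j, x k j ω)) μ)
    -- step-size condition
    (hγ : γ < 1 / (4 * L)) :
    ∀ k : ℕ,
      (∫ ω, ‖(n : ℝ)⁻¹ • (∑ i, x (k + 1) i ω) - xstar‖ ^ 2 ∂μ) ≤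
        (∫ ω, ‖(n : ℝ)⁻¹ • (∑ i, x k i ω) - xstar‖ ^ 2 ∂μ)
        - γ * ((∫ ω, (n : ℝ)⁻¹ * ∑ i, f i ((n : ℝ)⁻¹ • ∑ j, x k j ω) ∂μ)
            - (n : ℝ)⁻¹ * ∑ i, f i xstar)
        + 3 * L * γ / (2 * n)
            * (∫ ω, (∑ i, ‖x k i ω - (n : ℝ)⁻¹ • ∑ j, x k j ω‖ ^ 2) ∂μ)
        + γ ^ 2 * σ ^ 2 / n :=
  gossip_pga_descent_lemma_convex_general (mΩ := mΩ) μ d n hn f grad L σ γ H hL hγ0 hdiff hsmooth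
    hconv xstar hmin W hWcol ℱ hℱle x g hx_adapted hx_L2 hg_L2 hmean hvar hindep hrec_gossip
    hrec_avg hfint hγ
end

section
/- (Gradient norm decomposition, convex case.) Let f_1, …, f_n : ℝ^d → ℝ be convex and L-smooth, let f = (1/n)∑_{i=1}^n f_i, and let x* be a global minimizer of f. Then for any points x_1, …, x_n ∈ ℝ^d with average x̄ = (1/n)∑_i x_i, ∑_{i=1}^n ‖∇f_i(x_i)‖² ≤ 3·L²·∑_{i=1}^n ‖x_i − x̄‖² + 6·n·L·(f(x̄) − f(x*)) + 3·n·b², where b² = (1/n)∑_{i=1}^n ‖∇f_i(x*)‖². -/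
open Finset

/-!
Write `∇fᵢ(xᵢ) = (∇fᵢ(xᵢ) - ∇fᵢ(x̄)) + (∇fᵢ(x̄) - ∇fᵢ(x*)) + ∇fᵢ(x*)` and use
`‖a + b + c‖² ≤ 3 (‖a‖² + ‖b‖² + ‖c‖²)`. The first difference is at most `L ‖xᵢ - x̄‖` by
smoothness and the last terms sum to `n b²`. For the middle one, co-coercivity of the convex
`L`-smooth `fᵢ` gives `‖∇fᵢ(x̄) - ∇fᵢ(x*)‖² ≤ 2L (fᵢ(x̄) - fᵢ(x*) - ⟪∇fᵢ(x*), x̄ - x*⟫)`, and the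
inner products cancel in the sum over `i` because `∑ᵢ ∇fᵢ(x*) = 0` at the minimizer `x*` of `f`.
-/

open RealInnerProductSpace InnerProductSpace

section Gradient

variable {F : Type*} [NormedAddCommGroup F] [InnerProductSpace ℝ F] [CompleteSpace F]

theorem HasGradientAt.hasDerivAt_comp_add_smul {g : F → ℝ} {g' a v : F} {t : ℝ}
    (hg : HasGradientAt g g' (a + t • v)) :
    HasDerivAt (fun s : ℝ => g (a + s • v)) ⟪g', v⟫_ℝ t := by
  have hline : HasDerivAt (fun s : ℝ => a + s • v) v t := by
    simpa using ((hasDerivAt_id t).smul_const v).const_add a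
  simpa [toDual_apply_apply, Function.comp_def] using hg.hasFDerivAt.comp_hasDerivAt t hline

theorem HasGradientAt.fun_sum {ι : Type*} {s : Finset ι} {g : ι → F → ℝ} {g' : ι → F} {x : F}
    (hg : ∀ i ∈ s, HasGradientAt (g i) (g' i) x) :
    HasGradientAt (fun z => ∑ i ∈ s, g i z) (∑ i ∈ s, g' i) x := by
  rw [hasGradientAt_iff_hasFDerivAt, map_sum]
  exact HasFDerivAt.fun_sum fun i hi => (hg i hi).hasFDerivAt

theorem IsLocalMin.hasGradientAt_eq_zero {g : F → ℝ} {g' x : F} (hmin : IsLocalMin g x)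
    (hg : HasGradientAt g g' x) : g' = 0 :=
  (toDual ℝ F).map_eq_zero_iff.mp (hmin.hasFDerivAt_eq_zero hg.hasFDerivAt)

theorem ConvexOn.add_inner_le_of_hasGradientAt_s13 {s : Set F} {g : F → ℝ} {g' x y : F}
    (hconv : ConvexOn ℝ s g) (hx : x ∈ s) (hy : y ∈ s) (hg : HasGradientAt g g' x) :
    g x + ⟪g', y - x⟫_ℝ ≤ g y := by
  have hline : ConvexOn ℝ (AffineMap.lineMap x y ⁻¹' s) (fun t : ℝ => g (x + t • (y - x))) := by
    have hcomp : g ∘ AffineMap.lineMap x y = fun t : ℝ => g (x + t • (y - x)) := by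
      ext t; simp [AffineMap.lineMap_apply_module', add_comm]
    simpa only [← hcomp] using hconv.comp_affineMap (AffineMap.lineMap x y)
  have hg0 : HasGradientAt g g' (x + (0 : ℝ) • (y - x)) := by simpa using hg
  have hslope : slope (fun t : ℝ => g (x + t • (y - x))) 0 1 = g y - g x := by
    simp [slope_def_field]
  linarith [hline.le_slope_of_hasDerivAt (by simpa using hx) (by simpa using hy) one_pos
    hg0.hasDerivAt_comp_add_smul]

theorem le_add_inner_add_sq_of_lipschitz_gradient {g : F → ℝ} {G : F → F} {L : ℝ}
    (hg : ∀ z, HasGradientAt g (G z) z) (hG : ∀ y z, ‖G y - G z‖ ≤ L * ‖y - z‖) (x y : F) :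
    g y ≤ g x + ⟪G x, y - x⟫_ℝ + L / 2 * ‖y - x‖ ^ 2 := by
  set v := y - x
  let φ : ℝ → ℝ := fun t => g (x + t • v) - t * ⟪G x, v⟫_ℝ - L / 2 * t ^ 2 * ‖v‖ ^ 2
  have hφ : ∀ t, HasDerivAt φ (⟪G (x + t • v), v⟫_ℝ - ⟪G x, v⟫_ℝ - L * t * ‖v‖ ^ 2) t := by
    intro t
    have hquad : HasDerivAt (fun s : ℝ => L / 2 * s ^ 2 * ‖v‖ ^ 2) (L * t * ‖v‖ ^ 2) t :=
      (((hasDerivAt_pow 2 t).const_mul (L / 2)).mul_const _).congr_deriv (by push_cast; ring)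
    exact ((hg _).hasDerivAt_comp_add_smul.sub (hasDerivAt_mul_const _)).sub hquad
  have hφ_nonpos : ∀ t ∈ interior (Set.Icc (0 : ℝ) 1),
      ⟪G (x + t • v), v⟫_ℝ - ⟪G x, v⟫_ℝ - L * t * ‖v‖ ^ 2 ≤ 0 := by
    intro t ht
    rw [interior_Icc] at ht
    rw [sub_nonpos]
    calc ⟪G (x + t • v), v⟫_ℝ - ⟪G x, v⟫_ℝ = ⟪G (x + t • v) - G x, v⟫_ℝ := (inner_sub_left ..).symm
      _ ≤ ‖G (x + t • v) - G x‖ * ‖v‖ := real_inner_le_norm _ _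
      _ ≤ L * ‖t • v‖ * ‖v‖ := by
        gcongr
        simpa using hG (x + t • v) x
      _ = L * t * ‖v‖ ^ 2 := by rw [norm_smul, Real.norm_of_nonneg ht.1.le]; ring
  have hanti : AntitoneOn φ (Set.Icc 0 1) :=
    antitoneOn_of_hasDerivWithinAt_nonpos (convex_Icc 0 1)
      (fun t _ => (hφ t).continuousAt.continuousWithinAt) (fun t _ => (hφ t).hasDerivWithinAt)
      hφ_nonpos
  have hφ1 : φ 1 = g y - ⟪G x, y - x⟫_ℝ - L / 2 * ‖y - x‖ ^ 2 := by simp [φ, v]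
  have hφ0 : φ 0 = g x := by simp [φ]
  linarith [hanti (Set.left_mem_Icc.2 zero_le_one) (Set.right_mem_Icc.2 zero_le_one) zero_le_one]

theorem sq_norm_le_of_lipschitz_gradient_of_forall_le {g : F → ℝ} {G : F → F} {L : ℝ} {x : F}
    (hg : ∀ z, HasGradientAt g (G z) z) (hG : ∀ y z, ‖G y - G z‖ ≤ L * ‖y - z‖) (hL : 0 < L)
    (hmin : ∀ z, g x ≤ g z) (y : F) :
    ‖G y‖ ^ 2 ≤ 2 * L * (g y - g x) := by
  -- the gradient step `y ↦ y - L⁻¹ • G y` decreases `g` by at least `‖G y‖² / (2L)`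
  have hstep := le_add_inner_add_sq_of_lipschitz_gradient hg hG y (y - L⁻¹ • G y)
  have hgain : ⟪G y, y - L⁻¹ • G y - y⟫_ℝ + L / 2 * ‖y - L⁻¹ • G y - y‖ ^ 2
      = -(‖G y‖ ^ 2 / (2 * L)) := by
    rw [sub_sub_cancel_left, inner_neg_right, real_inner_smul_right, real_inner_self_eq_norm_sq,
      norm_neg, norm_smul, norm_inv, Real.norm_of_nonneg hL.le]
    field_simp
    ring
  calc ‖G y‖ ^ 2 = 2 * L * (‖G y‖ ^ 2 / (2 * L)) := by field_simp
    _ ≤ 2 * L * (g y - g x) := by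
      gcongr
      linarith [hmin (y - L⁻¹ • G y)]

theorem ConvexOn.sq_norm_sub_le_of_lipschitz_gradient {g : F → ℝ} {G : F → F} {L : ℝ}
    (hconv : ConvexOn ℝ Set.univ g) (hg : ∀ z, HasGradientAt g (G z) z)
    (hG : ∀ y z, ‖G y - G z‖ ≤ L * ‖y - z‖) (hL : 0 < L) (x y : F) :
    ‖G y - G x‖ ^ 2 ≤ 2 * L * (g y - g x - ⟪G x, y - x⟫_ℝ) := by
  -- tilting `g` by `⟪G x, ·⟫` keeps it convex and makes `x` a global minimizer
  set h : F → ℝ := fun z => g z - ⟪G x, z⟫_ℝ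
  have hh : ∀ z, HasGradientAt h (G z - G x) z := by
    intro z
    rw [hasGradientAt_iff_hasFDerivAt, map_sub]
    exact (hg z).hasFDerivAt.sub (toDual ℝ F (G x)).hasFDerivAt
  have hconv' : ConvexOn ℝ Set.univ h :=
    hconv.sub ((innerₛₗ ℝ (G x)).concaveOn convex_univ)
  have hmin : ∀ z, h x ≤ h z := fun z => by
    simpa only [sub_self, inner_zero_left, add_zero] using
      hconv'.add_inner_le_of_hasGradientAt_s13 (Set.mem_univ x) (Set.mem_univ z) (hh x)
  have := sq_norm_le_of_lipschitz_gradient_of_forall_le hh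
    (fun y z => by simpa only [sub_sub_sub_cancel_right] using hG y z) hL hmin y
  convert this using 2
  simp only [h, inner_sub_right]
  ring

theorem sum_sq_norm_sub_le_of_forall_le {ι : Type*} [Fintype ι] {g : ι → F → ℝ}
    {G : ι → F → F} {L : ℝ} (hconv : ∀ i, ConvexOn ℝ Set.univ (g i))
    (hg : ∀ i z, HasGradientAt (g i) (G i z) z) (hG : ∀ i y z, ‖G i y - G i z‖ ≤ L * ‖y - z‖)
    (hL : 0 < L) {xstar : F} (hmin : ∀ z, ∑ i, g i xstar ≤ ∑ i, g i z) (y : F) :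
    ∑ i, ‖G i y - G i xstar‖ ^ 2 ≤ 2 * L * (∑ i, g i y - ∑ i, g i xstar) := by
  have hzero : ∑ i, G i xstar = 0 :=
    IsLocalMin.hasGradientAt_eq_zero (.of_forall hmin) (HasGradientAt.fun_sum fun i _ => hg i xstar)
  calc ∑ i, ‖G i y - G i xstar‖ ^ 2
      ≤ ∑ i, 2 * L * (g i y - g i xstar - ⟪G i xstar, y - xstar⟫_ℝ) :=
        sum_le_sum fun i _ => (hconv i).sq_norm_sub_le_of_lipschitz_gradient (hg i) (hG i) hL _ _
    _ = 2 * L * (∑ i, g i y - ∑ i, g i xstar - ⟪∑ i, G i xstar, y - xstar⟫_ℝ) := by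
        rw [← mul_sum, sum_inner, sum_sub_distrib, sum_sub_distrib]
    _ = 2 * L * (∑ i, g i y - ∑ i, g i xstar) := by rw [hzero, inner_zero_left, sub_zero]

end Gradient

theorem sq_norm_add₃_le {E : Type*} [SeminormedAddGroup E] (a b c : E) :
    ‖a + b + c‖ ^ 2 ≤ 3 * (‖a‖ ^ 2 + ‖b‖ ^ 2 + ‖c‖ ^ 2) := by
  have h := norm_add₃_le (a := a) (b := b) (c := c)
  have h0 : 0 ≤ ‖a + b + c‖ := norm_nonneg _
  nlinarith [sq_nonneg (‖a‖ - ‖b‖), sq_nonneg (‖b‖ - ‖c‖), sq_nonneg (‖a‖ - ‖c‖)]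

/-- **Gradient norm decomposition, convex case.**
Let `f₁, …, fₙ : ℝ^d → ℝ` be convex and `L`-smooth, `f = (1/n) ∑ fᵢ`, and `x*` a global
minimizer of `f`.  Then for any points `x₁, …, xₙ` with average `x̄`,
`∑ᵢ ‖∇fᵢ(xᵢ)‖² ≤ 3L² ∑ᵢ ‖xᵢ − x̄‖² + 6nL (f(x̄) − f(x*)) + 3n b²`,
where `b² = (1/n) ∑ᵢ ‖∇fᵢ(x*)‖²`. -/
theorem gradient_norm_decomposition_convex
    (d n : ℕ) (hn : 0 < n)
    (f : Fin n → EuclideanSpace ℝ (Fin d) → ℝ)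
    (grad : Fin n → EuclideanSpace ℝ (Fin d) → EuclideanSpace ℝ (Fin d))
    (L : ℝ) (hL : 0 < L)
    (hdiff : ∀ i z, HasGradientAt (f i) (grad i z) z)
    (hconv : ∀ i, ConvexOn ℝ Set.univ (f i))
    (hsmooth : ∀ i y z, ‖grad i y - grad i z‖ ≤ L * ‖y - z‖)
    (xstar : EuclideanSpace ℝ (Fin d))
    (hmin : ∀ z, (n : ℝ)⁻¹ * ∑ i, f i xstar ≤ (n : ℝ)⁻¹ * ∑ i, f i z)
    (b : ℝ) (hb : b ^ 2 = (n : ℝ)⁻¹ * ∑ i, ‖grad i xstar‖ ^ 2)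
    (x : Fin n → EuclideanSpace ℝ (Fin d)) :
    ∑ i, ‖grad i (x i)‖ ^ 2 ≤
      3 * L ^ 2 * ∑ i, ‖x i - (n : ℝ)⁻¹ • ∑ j, x j‖ ^ 2
      + 6 * n * L * ((n : ℝ)⁻¹ * ∑ i, f i ((n : ℝ)⁻¹ • ∑ j, x j)
          - (n : ℝ)⁻¹ * ∑ i, f i xstar)
      + 3 * n * b ^ 2 := by
  set xb := (n : ℝ)⁻¹ • ∑ j, x j
  have hn' : (0 : ℝ) < n := Nat.cast_pos.2 hn
  have hvar := sum_sq_norm_sub_le_of_forall_le hconv hdiff hsmooth hL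
    (fun z => le_of_mul_le_mul_left (hmin z) (inv_pos.2 hn')) xb
  have hterm : ∀ i, ‖grad i (x i)‖ ^ 2 ≤ 3 * L ^ 2 * ‖x i - xb‖ ^ 2
      + 3 * ‖grad i xb - grad i xstar‖ ^ 2 + 3 * ‖grad i xstar‖ ^ 2 := by
    intro i
    have hlip : ‖grad i (x i) - grad i xb‖ ^ 2 ≤ L ^ 2 * ‖x i - xb‖ ^ 2 := by
      rw [← mul_pow]
      exact pow_le_pow_left₀ (norm_nonneg _) (hsmooth i _ _) 2
    have hsplit := sq_norm_add₃_le (grad i (x i) - grad i xb) (grad i xb - grad i xstar)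
      (grad i xstar)
    rw [sub_add_sub_cancel, sub_add_cancel] at hsplit
    linarith
  have hsum := sum_le_sum fun i (_ : i ∈ univ) => hterm i
  simp only [sum_add_distrib, ← mul_sum] at hsum
  have hf : 6 * n * L * ((n : ℝ)⁻¹ * ∑ i, f i xb - (n : ℝ)⁻¹ * ∑ i, f i xstar)
      = 6 * L * (∑ i, f i xb - ∑ i, f i xstar) := by field_simp
  have hb' : 3 * n * b ^ 2 = 3 * ∑ i, ‖grad i xstar‖ ^ 2 := by rw [hb]; field_simp
  rw [hf, hb']
  linarith
end

section
/- (Lower bound on the cross term.) Let f_1, …, f_n : ℝ^d → ℝ be convex and L-smooth, let f = (1/n)∑_{i=1}^n f_i, and let x* be a global minimizer of f. Then for any γ > 0 and any points x_1, …, x_n ∈ ℝ^d with average x̄ = (1/n)∑_i x_i, (2γ/n)·∑_{i=1}^n ⟨x̄ − x*, ∇f_i(x_i)⟩ ≥ 2γ·(f(x̄) − f(x*)) − (γ·L/n)·∑_{i=1}^n ‖x̄ − x_i‖². -/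
/-!
Convexity of `fᵢ` at `xᵢ` bounds `fᵢ(x*)` from below by the tangent plane at `xᵢ`, and
`L`-smoothness bounds `fᵢ(x̄)` from above by the tangent plane at `xᵢ` plus `(L/2)‖x̄ − xᵢ‖²`.
Subtracting, the tangent planes leave exactly `⟨x̄ − x*, ∇fᵢ(xᵢ)⟩`; averaging over `i` gives the
claim.
-/

open Finset
open scoped RealInnerProductSpace

lemma image_one_le_of_deriv_sub_le_mul {φ φ' : ℝ → ℝ} {K : ℝ}
    (hφ : ∀ t, HasDerivAt φ (φ' t) t) (hK : ∀ t ∈ Set.Ico (0 : ℝ) 1, φ' t - φ' 0 ≤ K * t) :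
    φ 1 ≤ φ 0 + φ' 0 + K / 2 := by
  have hB : ∀ t, HasDerivAt (fun s ↦ φ 0 + s * φ' 0 + K / 2 * s ^ 2) (φ' 0 + K * t) t := by
    intro t
    have := (((hasDerivAt_id' t).mul_const (φ' 0)).const_add (φ 0)).add
      ((hasDerivAt_pow 2 t).const_mul (K / 2))
    exact this.congr_deriv (by simp only [one_mul, Nat.cast_ofNat]; ring)
  have := image_le_of_deriv_right_le_deriv_boundary (a := 0) (b := 1)
    (fun t _ ↦ (hφ t).continuousAt.continuousWithinAt)
    (fun t _ ↦ (hφ t).hasDerivWithinAt) (by simp)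
    (fun t _ ↦ (hB t).continuousAt.continuousWithinAt)
    (fun t _ ↦ (hB t).hasDerivWithinAt)
    (fun t ht ↦ by linarith [hK t ht]) (Set.right_mem_Icc.mpr zero_le_one)
  simpa using this

section InnerProductSpace

variable {E : Type*} [NormedAddCommGroup E] [InnerProductSpace ℝ E] [CompleteSpace E]

lemma HasGradientAt.hasDerivAt_lineMap {f : E → ℝ} {g x y : E} {t : ℝ}
    (h : HasGradientAt f g (AffineMap.lineMap x y t)) :
    HasDerivAt (fun s : ℝ ↦ f (AffineMap.lineMap x y s)) ⟪g, y - x⟫ t := by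
  simpa [Function.comp_def] using
    h.hasFDerivAt.comp_hasDerivAt t AffineMap.hasDerivAt_lineMap

lemma ConvexOn.inner_gradient_sub_le {s : Set E} {f : E → ℝ} {g x y : E}
    (hf : ConvexOn ℝ s f) (hx : x ∈ s) (hy : y ∈ s) (hg : HasGradientAt f g x) :
    ⟪g, y - x⟫ ≤ f y - f x := by
  have hline : ConvexOn ℝ (AffineMap.lineMap x y ⁻¹' s) (f ∘ AffineMap.lineMap x y) :=
    hf.comp_affineMap _
  have hderiv : HasDerivAt (f ∘ AffineMap.lineMap x y) ⟪g, y - x⟫ (0 : ℝ) :=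
    HasGradientAt.hasDerivAt_lineMap (by rwa [AffineMap.lineMap_apply_zero])
  simpa [slope_def_field] using
    hline.le_slope_of_hasDerivAt (by simpa using hx) (by simpa using hy) one_pos hderiv

lemma le_add_inner_gradient_add_sq {f : E → ℝ} {g : E → E} {L : ℝ}
    (hg : ∀ z, HasGradientAt f (g z) z) (hlip : ∀ y z, ‖g y - g z‖ ≤ L * ‖y - z‖) (x y : E) :
    f y ≤ f x + ⟪g x, y - x⟫ + L / 2 * ‖y - x‖ ^ 2 := by
  have hbound : ∀ t ∈ Set.Ico (0 : ℝ) 1,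
      ⟪g (AffineMap.lineMap x y t), y - x⟫ - ⟪g (AffineMap.lineMap x y (0 : ℝ)), y - x⟫ ≤
        L * ‖y - x‖ ^ 2 * t := by
    rintro t ⟨ht, -⟩
    calc ⟪g (AffineMap.lineMap x y t), y - x⟫ - ⟪g (AffineMap.lineMap x y (0 : ℝ)), y - x⟫
        = ⟪g (AffineMap.lineMap x y t) - g x, y - x⟫ := by simp [inner_sub_left]
      _ ≤ ‖g (AffineMap.lineMap x y t) - g x‖ * ‖y - x‖ := real_inner_le_norm _ _
      _ ≤ L * ‖AffineMap.lineMap x y (t : ℝ) - x‖ * ‖y - x‖ := by gcongr; exact hlip _ _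
      _ = L * ‖y - x‖ ^ 2 * t := by
        rw [← vsub_eq_sub, AffineMap.lineMap_vsub_left, vsub_eq_sub, norm_smul,
          Real.norm_of_nonneg ht]
        ring
  simpa [mul_div_right_comm] using
    image_one_le_of_deriv_sub_le_mul (fun t ↦ (hg _).hasDerivAt_lineMap) hbound

lemma sub_le_inner_gradient_add_sq {f : E → ℝ} {g : E → E} {L : ℝ}
    (hg : ∀ z, HasGradientAt f (g z) z) (hf : ConvexOn ℝ Set.univ f)
    (hlip : ∀ y z, ‖g y - g z‖ ≤ L * ‖y - z‖) (x z w : E) :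
    f z - f w ≤ ⟪z - w, g x⟫ + L / 2 * ‖z - x‖ ^ 2 := by
  have hlower := hf.inner_gradient_sub_le (Set.mem_univ x) (Set.mem_univ w) (hg x)
  have hupper := le_add_inner_gradient_add_sq hg hlip x z
  have hsplit : ⟪z - w, g x⟫ = ⟪g x, z - x⟫ - ⟪g x, w - x⟫ := by
    rw [real_inner_comm, ← inner_sub_right, sub_sub_sub_cancel_right]
  linarith

end InnerProductSpace

theorem cross_term_lower_bound_general
    (d n : ℕ)
    (f : Fin n → EuclideanSpace ℝ (Fin d) → ℝ)
    (grad : Fin n → EuclideanSpace ℝ (Fin d) → EuclideanSpace ℝ (Fin d))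
    (L : ℝ)
    (hdiff : ∀ i z, HasGradientAt (f i) (grad i z) z)
    (hconv : ∀ i, ConvexOn ℝ Set.univ (f i))
    (hsmooth : ∀ i y z, ‖grad i y - grad i z‖ ≤ L * ‖y - z‖)
    (xstar : EuclideanSpace ℝ (Fin d))
    (γ : ℝ) (hγ : 0 < γ)
    (x : Fin n → EuclideanSpace ℝ (Fin d)) :
    2 * γ / n * ∑ i, ⟪(n : ℝ)⁻¹ • (∑ j, x j) - xstar, grad i (x i)⟫ ≥
      2 * γ * ((n : ℝ)⁻¹ * ∑ i, f i ((n : ℝ)⁻¹ • ∑ j, x j)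
          - (n : ℝ)⁻¹ * ∑ i, f i xstar)
      - γ * L / n * ∑ i, ‖(n : ℝ)⁻¹ • (∑ j, x j) - x i‖ ^ 2 := by
  set xbar := (n : ℝ)⁻¹ • ∑ j, x j
  have hsum : ∑ i, (f i xbar - f i xstar) ≤
      ∑ i, (⟪xbar - xstar, grad i (x i)⟫ + L / 2 * ‖xbar - x i‖ ^ 2) :=
    sum_le_sum fun i _ ↦
      sub_le_inner_gradient_add_sq (hdiff i) (hconv i) (hsmooth i) (x i) xbar xstar
  rw [sum_sub_distrib, sum_add_distrib, ← mul_sum] at hsum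
  calc 2 * γ * ((n : ℝ)⁻¹ * ∑ i, f i xbar - (n : ℝ)⁻¹ * ∑ i, f i xstar)
        - γ * L / n * ∑ i, ‖xbar - x i‖ ^ 2
      = 2 * γ / n * (∑ i, f i xbar - ∑ i, f i xstar - L / 2 * ∑ i, ‖xbar - x i‖ ^ 2) := by
        ring
    _ ≤ 2 * γ / n * ∑ i, ⟪xbar - xstar, grad i (x i)⟫ := by
        gcongr
        linarith

/-- **Lower bound on the cross term.**
Let `f₁, …, fₙ : ℝ^d → ℝ` be convex and `L`-smooth, `f = (1/n) ∑ fᵢ`, and `x*` a global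
minimizer of `f`.  Then for any `γ > 0` and points `x₁, …, xₙ` with average `x̄`,
`(2γ/n) ∑ᵢ ⟨x̄ − x*, ∇fᵢ(xᵢ)⟩ ≥ 2γ (f(x̄) − f(x*)) − (γL/n) ∑ᵢ ‖x̄ − xᵢ‖²`. -/
theorem cross_term_lower_bound
    (d n : ℕ) (hn : 0 < n)
    (f : Fin n → EuclideanSpace ℝ (Fin d) → ℝ)
    (grad : Fin n → EuclideanSpace ℝ (Fin d) → EuclideanSpace ℝ (Fin d))
    (L : ℝ) (hL : 0 < L)
    (hdiff : ∀ i z, HasGradientAt (f i) (grad i z) z)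
    (hconv : ∀ i, ConvexOn ℝ Set.univ (f i))
    (hsmooth : ∀ i y z, ‖grad i y - grad i z‖ ≤ L * ‖y - z‖)
    (xstar : EuclideanSpace ℝ (Fin d))
    (hmin : ∀ z, (n : ℝ)⁻¹ * ∑ i, f i xstar ≤ (n : ℝ)⁻¹ * ∑ i, f i z)
    (γ : ℝ) (hγ : 0 < γ)
    (x : Fin n → EuclideanSpace ℝ (Fin d)) :
    2 * γ / n * ∑ i, ⟪(n : ℝ)⁻¹ • (∑ j, x j) - xstar, grad i (x i)⟫ ≥
      2 * γ * ((n : ℝ)⁻¹ * ∑ i, f i ((n : ℝ)⁻¹ • ∑ j, x j)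
          - (n : ℝ)⁻¹ * ∑ i, f i xstar)
      - γ * L / n * ∑ i, ‖(n : ℝ)⁻¹ • (∑ j, x j) - x i‖ ^ 2 :=
  cross_term_lower_bound_general d n f grad L hdiff hconv hsmooth xstar γ hγ x
end

section
/- (Deterministic one-step contraction of the averaged iterate.) Let f_1, …, f_n : ℝ^d → ℝ be convex and L-smooth, let f = (1/n)∑_{i=1}^n f_i, and let x* be a global minimizer of f. If 0 < γ < 1/(4L), then for any points x_1, …, x_n ∈ ℝ^d with average x̄ = (1/n)∑_i x_i, ‖x̄ − x* − (γ/n)·∑_{i=1}^n ∇f_i(x_i)‖² ≤ ‖x̄ − x*‖² − γ·(f(x̄) − f(x*)) + (3·γ·L/(2n))·∑_{i=1}^n ‖x̄ − x_i‖². -/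
/-!
Put `v = ∑ wᵢ ∇fᵢ(xᵢ)`, `D = f(y) − f(x*)` and `s = ∑ wᵢ ‖y − xᵢ‖²`, so that
`‖y − x* − γ v‖² = ‖y − x*‖² − 2γ⟪v, y − x*⟫ + γ²‖v‖²`.
Convexity of `fᵢ` at `xᵢ` towards `x*` combined with the descent lemma from `xᵢ` to `y` gives
`⟪∇fᵢ(xᵢ), y − x*⟫ ≥ fᵢ(y) − fᵢ(x*) − L/2 ‖y − xᵢ‖²`, hence `⟪v, y − x*⟫ ≥ D − L s / 2`.
Writing `v = (v − ∇f(y)) + ∇f(y)`, Jensen and smoothness give `‖v − ∇f(y)‖² ≤ L² s`, while the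
descent lemma at the minimiser gives `‖∇f(y)‖² ≤ 2 L D`; so `‖v‖² ≤ 2 L² s + 4 L D`, and
`γ L ≤ 1/4` absorbs the `γ²` terms.
-/

open Finset Set AffineMap
open scoped InnerProductSpace

section FirstOrder

variable {E : Type*} [NormedAddCommGroup E] [NormedSpace ℝ E] {f : E → ℝ}

theorem ConvexOn.add_fderiv_sub_le {s : Set E} {f' : E →L[ℝ] ℝ} (hf : ConvexOn ℝ s f) {x y : E}
    (hx : x ∈ s) (hy : y ∈ s) (hf' : HasFDerivAt f f' x) : f x + f' (y - x) ≤ f y := by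
  have hline : ConvexOn ℝ (lineMap x y ⁻¹' s) (f ∘ (lineMap x y : ℝ → E)) :=
    hf.comp_affineMap (lineMap x y)
  have hderiv : HasDerivAt (f ∘ (lineMap x y : ℝ → E)) (f' (y - x)) 0 := by
    simpa using hf'.comp_hasDerivAt_of_eq (0 : ℝ) hasDerivAt_lineMap (by simp)
  have := hline.le_slope_of_hasDerivAt (by simpa using hx) (by simpa using hy) one_pos hderiv
  simp only [slope_def_field, Function.comp_apply, lineMap_apply_zero, lineMap_apply_one,
    sub_zero, div_one] at this
  linarith

theorem le_add_fderiv_sub_add_sq_of_lipschitz {f' : E → E →L[ℝ] ℝ} {L : ℝ}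
    (hf : ∀ z, HasFDerivAt f (f' z) z) (hf' : ∀ a b, ‖f' a - f' b‖ ≤ L * ‖a - b‖) (x y : E) :
    f y ≤ f x + f' x (y - x) + L / 2 * ‖y - x‖ ^ 2 := by
  set ψ : ℝ → ℝ := fun t ↦ f (lineMap x y t) - t * f' x (y - x) - L / 2 * ‖y - x‖ ^ 2 * t ^ 2
  have hψ (t : ℝ) : HasDerivAt ψ
      ((f' (lineMap x y t) - f' x) (y - x) - L * ‖y - x‖ ^ 2 * t) t := by
    have h1 := (hf (lineMap x y t)).comp_hasDerivAt t hasDerivAt_lineMap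
    have h2 := hasDerivAt_mul_const (x := t) (f' x (y - x))
    have h3 := (hasDerivAt_pow 2 t).const_mul (L / 2 * ‖y - x‖ ^ 2)
    refine ((h1.sub h2).sub h3).congr_deriv ?_
    simp only [sub_apply, Nat.cast_ofNat, pow_one, Nat.add_one_sub_one]
    ring
  have hanti : AntitoneOn ψ (Icc 0 1) := by
    refine antitoneOn_of_hasDerivWithinAt_nonpos (convex_Icc 0 1)
      (fun t _ ↦ (hψ t).continuousAt.continuousWithinAt) (fun t _ ↦ (hψ t).hasDerivWithinAt) ?_
    intro t ht
    rw [interior_Icc] at ht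
    have hdist : ‖lineMap x y t - x‖ = t * ‖y - x‖ := by
      rw [← vsub_eq_sub, lineMap_vsub_left, vsub_eq_sub, norm_smul, Real.norm_of_nonneg ht.1.le]
    have hbound : (f' (lineMap x y t) - f' x) (y - x) ≤ L * ‖y - x‖ ^ 2 * t := calc
      _ ≤ ‖f' (lineMap x y t) - f' x‖ * ‖y - x‖ :=
          (le_abs_self _).trans ((f' (lineMap x y t) - f' x).le_opNorm _)
      _ ≤ L * ‖lineMap x y t - x‖ * ‖y - x‖ := by gcongr; exact hf' _ _
      _ = L * ‖y - x‖ ^ 2 * t := by rw [hdist]; ring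
    linarith
  have := hanti (left_mem_Icc.2 zero_le_one) (right_mem_Icc.2 zero_le_one) zero_le_one
  simp only [ψ, lineMap_apply_zero, lineMap_apply_one] at this
  linarith

end FirstOrder

section Gradient

variable {E : Type*} [NormedAddCommGroup E] [InnerProductSpace ℝ E] [CompleteSpace E]
  {f : E → ℝ} {g : E → E} {L : ℝ}

theorem le_add_inner_sub_add_sq_of_lipschitz (hf : ∀ z, HasGradientAt f (g z) z)
    (hg : ∀ a b, ‖g a - g b‖ ≤ L * ‖a - b‖) (x y : E) :
    f y ≤ f x + ⟪g x, y - x⟫_ℝ + L / 2 * ‖y - x‖ ^ 2 := by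
  have hf' : ∀ a b, ‖InnerProductSpace.toDual ℝ E (g a) - InnerProductSpace.toDual ℝ E (g b)‖
      ≤ L * ‖a - b‖ := fun a b ↦ by
    rw [← map_sub, LinearIsometryEquiv.norm_map]; exact hg a b
  simpa using le_add_fderiv_sub_add_sq_of_lipschitz (fun z ↦ (hf z).hasFDerivAt) hf' x y

theorem ConvexOn.three_point_le_of_lipschitz (hconv : ConvexOn ℝ univ f)
    (hf : ∀ z, HasGradientAt f (g z) z) (hg : ∀ a b, ‖g a - g b‖ ≤ L * ‖a - b‖) (x y z : E) :
    f y ≤ f z + ⟪g x, y - z⟫_ℝ + L / 2 * ‖y - x‖ ^ 2 := by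
  have hlower : f x + ⟪g x, z - x⟫_ℝ ≤ f z := by
    simpa using hconv.add_fderiv_sub_le (mem_univ x) (mem_univ z) (hf x).hasFDerivAt
  have hupper := le_add_inner_sub_add_sq_of_lipschitz hf hg x y
  have hsplit : ⟪g x, y - x⟫_ℝ = ⟪g x, y - z⟫_ℝ + ⟪g x, z - x⟫_ℝ := by
    rw [← inner_add_right, sub_add_sub_cancel]
  linarith

theorem norm_sq_le_two_mul_sub_of_lipschitz_of_forall_le (hL : 0 < L)
    (hf : ∀ z, HasGradientAt f (g z) z) (hg : ∀ a b, ‖g a - g b‖ ≤ L * ‖a - b‖)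
    {xstar : E} (hmin : ∀ z, f xstar ≤ f z) (x : E) :
    ‖g x‖ ^ 2 ≤ 2 * L * (f x - f xstar) := by
  have h := le_add_inner_sub_add_sq_of_lipschitz hf hg x (x - L⁻¹ • g x)
  rw [sub_sub_cancel_left, inner_neg_right, inner_smul_right, real_inner_self_eq_norm_sq,
    norm_neg, norm_smul, Real.norm_of_nonneg (inv_nonneg.2 hL.le)] at h
  have hquad : L / 2 * (L⁻¹ * ‖g x‖) ^ 2 = L⁻¹ * ‖g x‖ ^ 2 / 2 := by
    field_simp
  have hnorm : ‖g x‖ ^ 2 = L * (L⁻¹ * ‖g x‖ ^ 2) := by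
    field_simp
  nlinarith [hmin (x - L⁻¹ • g x)]

end Gradient

section WeightedSum

variable {ι : Type*} [Fintype ι] {w : ι → ℝ}

theorem norm_sum_smul_sq_le {F : Type*} [NormedAddCommGroup F] [NormedSpace ℝ F]
    (hw₀ : ∀ i, 0 ≤ w i) (hw₁ : ∑ i, w i = 1) (v : ι → F) :
    ‖∑ i, w i • v i‖ ^ 2 ≤ ∑ i, w i * ‖v i‖ ^ 2 :=
  (convexOn_univ_norm.pow (fun _ _ ↦ norm_nonneg _) 2).map_sum_le (fun i _ ↦ hw₀ i) hw₁
    (fun _ _ ↦ mem_univ _)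

theorem norm_sum_smul_sub_le_of_lipschitz {X F : Type*} [SeminormedAddCommGroup X]
    [NormedAddCommGroup F] [NormedSpace ℝ F] {g : ι → X → F} {L : ℝ} (hw₀ : ∀ i, 0 ≤ w i) (hw₁ : ∑ i, w i = 1)
    (hg : ∀ i a b, ‖g i a - g i b‖ ≤ L * ‖a - b‖) (a b : X) :
    ‖∑ i, w i • g i a - ∑ i, w i • g i b‖ ≤ L * ‖a - b‖ := calc
  _ = ‖∑ i, w i • (g i a - g i b)‖ := by simp only [smul_sub, sum_sub_distrib]
  _ ≤ ∑ i, w i • ‖g i a - g i b‖ :=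
      convexOn_univ_norm.map_sum_le (fun i _ ↦ hw₀ i) hw₁ (fun _ _ ↦ mem_univ _)
  _ ≤ ∑ i, w i • (L * ‖a - b‖) := by gcongr with i; exacts [hw₀ i, hg i a b]
  _ = L * ‖a - b‖ := by rw [← sum_smul, hw₁, one_smul]

variable {E : Type*} [NormedAddCommGroup E] [InnerProductSpace ℝ E] [CompleteSpace E]

theorem hasGradientAt_sum_mul {f : ι → E → ℝ} {g : ι → E} {x : E}
    (hf : ∀ i, HasGradientAt (f i) (g i) x) (w : ι → ℝ) :
    HasGradientAt (fun z ↦ ∑ i, w i * f i z) (∑ i, w i • g i) x := by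
  rw [hasGradientAt_iff_hasFDerivAt]
  refine (HasFDerivAt.fun_sum fun i _ ↦ (hf i).hasFDerivAt.const_mul (w i)).congr_fderiv ?_
  ext v
  simp

theorem norm_sub_smul_sum_smul_gradient_sq_le {f : ι → E → ℝ} {g : ι → E → E} {L : ℝ}
    (hw₀ : ∀ i, 0 ≤ w i) (hw₁ : ∑ i, w i = 1) (hL : 0 < L)
    (hf : ∀ i z, HasGradientAt (f i) (g i z) z) (hconv : ∀ i, ConvexOn ℝ univ (f i))
    (hg : ∀ i a b, ‖g i a - g i b‖ ≤ L * ‖a - b‖)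
    {xstar : E} (hmin : ∀ z, ∑ i, w i * f i xstar ≤ ∑ i, w i * f i z)
    {γ : ℝ} (hγ₀ : 0 ≤ γ) (hγL : γ * L ≤ 1 / 4) (x : ι → E) (y : E) :
    ‖y - xstar - γ • ∑ i, w i • g i (x i)‖ ^ 2 ≤
      ‖y - xstar‖ ^ 2 - γ * (∑ i, w i * f i y - ∑ i, w i * f i xstar)
        + 3 * γ * L / 2 * ∑ i, w i * ‖y - x i‖ ^ 2 := by
  set v := ∑ i, w i • g i (x i)
  set G := ∑ i, w i • g i y
  set D := ∑ i, w i * f i y - ∑ i, w i * f i xstar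
  set s := ∑ i, w i * ‖y - x i‖ ^ 2
  have hD : 0 ≤ D := sub_nonneg.2 (hmin y)
  have hs : 0 ≤ s := sum_nonneg fun i _ ↦ mul_nonneg (hw₀ i) (sq_nonneg _)
  have hinner : D - L / 2 * s ≤ ⟪v, y - xstar⟫_ℝ := by
    have hterm (i : ι) :
        w i * (f i y - f i xstar - L / 2 * ‖y - x i‖ ^ 2) ≤ w i * ⟪g i (x i), y - xstar⟫_ℝ := by
      have := (hconv i).three_point_le_of_lipschitz (hf i) (hg i) (x i) y xstar
      gcongr
      · exact hw₀ i
      · linarith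
    have := sum_le_sum (s := univ) fun i _ ↦ hterm i
    simp only [mul_sub, sum_sub_distrib] at this
    simpa [D, s, v, sum_inner, real_inner_smul_left, mul_sum, mul_left_comm] using this
  have hG : ‖G‖ ^ 2 ≤ 2 * L * D :=
    norm_sq_le_two_mul_sub_of_lipschitz_of_forall_le hL
      (fun z ↦ hasGradientAt_sum_mul (fun i ↦ hf i z) w)
      (norm_sum_smul_sub_le_of_lipschitz hw₀ hw₁ hg) hmin y
  have hvG : ‖v - G‖ ^ 2 ≤ L ^ 2 * s := calc
    ‖v - G‖ ^ 2 = ‖∑ i, w i • (g i (x i) - g i y)‖ ^ 2 := by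
        simp only [v, G, smul_sub, sum_sub_distrib]
    _ ≤ ∑ i, w i * ‖g i (x i) - g i y‖ ^ 2 := norm_sum_smul_sq_le hw₀ hw₁ _
    _ ≤ ∑ i, w i * (L * ‖y - x i‖) ^ 2 := by
        gcongr with i
        · exact hw₀ i
        · rw [norm_sub_rev y]; exact hg i _ _
    _ = L ^ 2 * s := by simp only [s, mul_sum, mul_pow, mul_left_comm]
  have hv : ‖v‖ ^ 2 ≤ 2 * L ^ 2 * s + 4 * L * D := calc
    ‖v‖ ^ 2 ≤ (‖v - G‖ + ‖G‖) ^ 2 := by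
        gcongr; simpa using norm_add_le (v - G) G
    _ ≤ 2 * (‖v - G‖ ^ 2 + ‖G‖ ^ 2) := add_sq_le
    _ ≤ 2 * L ^ 2 * s + 4 * L * D := by linarith
  have hexpand : ‖y - xstar - γ • v‖ ^ 2
      = ‖y - xstar‖ ^ 2 - 2 * γ * ⟪v, y - xstar⟫_ℝ + γ ^ 2 * ‖v‖ ^ 2 := by
    rw [norm_sub_sq_real, real_inner_smul_right, norm_smul, Real.norm_of_nonneg hγ₀,
      real_inner_comm]
    ring
  rw [hexpand]
  nlinarith [mul_le_mul_of_nonneg_left hinner hγ₀, mul_le_mul_of_nonneg_left hv (sq_nonneg γ),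
    mul_nonneg (mul_nonneg hγ₀ hD) (by linarith : (0 : ℝ) ≤ 1 - 4 * (γ * L)),
    mul_nonneg (mul_nonneg hγ₀ hL.le) hs]

end WeightedSum

/-- **Deterministic one-step contraction of the averaged iterate.**
Let `f₁, …, fₙ : ℝ^d → ℝ` be convex and `L`-smooth, `f = (1/n) ∑ fᵢ`, and `x*` a global
minimizer of `f`.  If `0 < γ < 1/(4L)`, then for any points `x₁, …, xₙ` with average `x̄`,
`‖x̄ − x* − (γ/n) ∑ᵢ ∇fᵢ(xᵢ)‖² ≤ ‖x̄ − x*‖² − γ (f(x̄) − f(x*)) + (3γL/(2n)) ∑ᵢ ‖x̄ − xᵢ‖²`. -/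
theorem one_step_contraction_of_averaged_iterate
    (d n : ℕ) (hn : 0 < n)
    (f : Fin n → EuclideanSpace ℝ (Fin d) → ℝ)
    (grad : Fin n → EuclideanSpace ℝ (Fin d) → EuclideanSpace ℝ (Fin d))
    (L : ℝ) (hL : 0 < L)
    (hdiff : ∀ i z, HasGradientAt (f i) (grad i z) z)
    (hconv : ∀ i, ConvexOn ℝ Set.univ (f i))
    (hsmooth : ∀ i y z, ‖grad i y - grad i z‖ ≤ L * ‖y - z‖)
    (xstar : EuclideanSpace ℝ (Fin d))
    (hmin : ∀ z, (n : ℝ)⁻¹ * ∑ i, f i xstar ≤ (n : ℝ)⁻¹ * ∑ i, f i z)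
    (γ : ℝ) (hγ0 : 0 < γ) (hγ : γ < 1 / (4 * L))
    (x : Fin n → EuclideanSpace ℝ (Fin d)) :
    ‖(n : ℝ)⁻¹ • (∑ j, x j) - xstar - (γ / n) • ∑ i, grad i (x i)‖ ^ 2 ≤
      ‖(n : ℝ)⁻¹ • (∑ j, x j) - xstar‖ ^ 2
      - γ * ((n : ℝ)⁻¹ * ∑ i, f i ((n : ℝ)⁻¹ • ∑ j, x j)
          - (n : ℝ)⁻¹ * ∑ i, f i xstar)
      + 3 * γ * L / (2 * n) * ∑ i, ‖(n : ℝ)⁻¹ • (∑ j, x j) - x i‖ ^ 2 := by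
  have hw₁ : ∑ _i : Fin n, (n : ℝ)⁻¹ = 1 := by simp [hn.ne']
  have hγL : γ * L ≤ 1 / 4 := by
    rw [lt_div_iff₀ (by positivity)] at hγ
    linarith
  have key := norm_sub_smul_sum_smul_gradient_sq_le (w := fun _ ↦ (n : ℝ)⁻¹)
    (fun _ ↦ by positivity) hw₁ hL hdiff hconv hsmooth (by simpa [← mul_sum] using hmin)
    hγ0.le hγL x ((n : ℝ)⁻¹ • ∑ j, x j)
  simp only [← mul_sum, ← smul_sum, smul_smul] at key
  rw [div_eq_mul_inv γ]
  convert key using 2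
  ring
end

section
/- (Step-size tuning inequality.) Let r0, r1, r2 ≥ 0, d > 0, and T ≥ 0 be reals, and define φ(γ) = r0/((T+1)·γ) + r1·γ + r2·γ² for γ > 0. Then the choice γ* = min{ 1/d, (r0/(r1·(T+1)))^{1/2}, (r0/(r2·(T+1)))^{1/3} } (interpreting a term as +∞ when its denominator vanishes) satisfies φ(γ*) ≤ d·r0/(T+1) + 2·(r0·r1/(T+1))^{1/2} + 2·r2^{1/3}·(r0/(T+1))^{2/3}. -/
private lemma cube_root_cube {a : ℝ} (ha : 0 ≤ a) : (a ^ 3) ^ ((1 : ℝ) / 3) = a := by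
  rw [← Real.rpow_natCast a 3, ← Real.rpow_mul ha]
  norm_num

private lemma eq_of_cube_eq {a b : ℝ} (ha : 0 ≤ a) (hb : 0 ≤ b) (h : a ^ 3 = b ^ 3) :
    a = b := by
  rw [← cube_root_cube ha, h, cube_root_cube hb]

private lemma eq_of_sq_eq {a b : ℝ} (ha : 0 ≤ a) (hb : 0 ≤ b) (h : a ^ 2 = b ^ 2) :
    a = b := by
  rw [← Real.sqrt_sq ha, h, Real.sqrt_sq hb]

private lemma rpow_pow3 {a : ℝ} (ha : 0 ≤ a) (p : ℝ) : (a ^ p) ^ 3 = a ^ (p * 3) := by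
  rw [← Real.rpow_natCast (a ^ p) 3, ← Real.rpow_mul ha]
  norm_num

/-- **Step-size tuning inequality.**
Let `r0, r1, r2 ≥ 0`, `d > 0`, `T ≥ 0` be reals and define
`φ(γ) = r0/((T+1)γ) + r1 γ + r2 γ²`.  Then the choice
`γ* = min { 1/d, (r0/(r1 (T+1)))^{1/2}, (r0/(r2 (T+1)))^{1/3} }`
(where a term is interpreted as `+∞`, i.e. dropped from the minimum, when its denominator
vanishes) satisfies
`φ(γ*) ≤ d r0/(T+1) + 2 (r0 r1/(T+1))^{1/2} + 2 r2^{1/3} (r0/(T+1))^{2/3}`. -/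
theorem step_size_tuning_inequality
    (r0 r1 r2 d T : ℝ)
    (hr0 : 0 ≤ r0) (hr1 : 0 ≤ r1) (hr2 : 0 ≤ r2) (hd : 0 < d) (hT : 0 ≤ T)
    (γstar : ℝ)
    (hγstar : γstar =
      min (1 / d)
        (min (if r1 = 0 then 1 / d else Real.sqrt (r0 / (r1 * (T + 1))))
          (if r2 = 0 then 1 / d else (r0 / (r2 * (T + 1))) ^ ((1 : ℝ) / 3)))) :
    r0 / ((T + 1) * γstar) + r1 * γstar + r2 * γstar ^ 2 ≤
      d * r0 / (T + 1) + 2 * Real.sqrt (r0 * r1 / (T + 1))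
        + 2 * r2 ^ ((1 : ℝ) / 3) * (r0 / (T + 1)) ^ ((2 : ℝ) / 3) := by
  have hT1 : (0 : ℝ) < T + 1 := by linarith
  have hT1' : (T : ℝ) + 1 ≠ 0 := ne_of_gt hT1
  have hdinv : (0 : ℝ) < 1 / d := by positivity
  set γ1 : ℝ := if r1 = 0 then 1 / d else Real.sqrt (r0 / (r1 * (T + 1))) with hγ1def
  set γ2 : ℝ := if r2 = 0 then 1 / d else (r0 / (r2 * (T + 1))) ^ ((1 : ℝ) / 3) with hγ2def
  have hγ1nn : 0 ≤ γ1 := by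
    rw [hγ1def]; split
    · positivity
    · exact Real.sqrt_nonneg _
  have hγ2nn : 0 ≤ γ2 := by
    rw [hγ2def]; split
    · positivity
    · positivity
  have hγnn : 0 ≤ γstar := by
    rw [hγstar]
    exact le_min hdinv.le (le_min hγ1nn hγ2nn)
  have hBnn : 0 ≤ Real.sqrt (r0 * r1 / (T + 1)) := Real.sqrt_nonneg _
  have hCnn : 0 ≤ r2 ^ ((1 : ℝ) / 3) * (r0 / (T + 1)) ^ ((2 : ℝ) / 3) := by positivity
  have hAnn : 0 ≤ d * r0 / (T + 1) := by positivity
  rcases eq_or_lt_of_le hr0 with h0 | hr0pos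
  · -- case r0 = 0
    subst h0
    simp only [zero_div, Real.zero_rpow (by norm_num : (2 : ℝ) / 3 ≠ 0), zero_mul,
      Real.sqrt_zero, mul_zero, add_zero, zero_add]
    have key : r1 * γstar + r2 * γstar ^ 2 ≤ 0 := by
      by_cases h1 : r1 = 0
      · by_cases h2 : r2 = 0
        · simp [h1, h2]
        · have hle : γstar ≤ 0 := by
            rw [hγstar]
            refine le_trans (le_trans (min_le_right _ _) (min_le_right _ _)) ?_
            rw [hγ2def, if_neg h2]
            simp [Real.zero_rpow (by norm_num : (1 : ℝ) / 3 ≠ 0)]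
          have hγ0 : γstar = 0 := le_antisymm hle hγnn
          simp [hγ0]
      · have hle : γstar ≤ 0 := by
          rw [hγstar]
          refine le_trans (le_trans (min_le_right _ _) (min_le_left _ _)) ?_
          rw [hγ1def, if_neg h1]
          simp
        have hγ0 : γstar = 0 := le_antisymm hle hγnn
        simp [hγ0]
    linarith
  · -- case r0 > 0
    have hγ1pos : 0 < γ1 := by
      rw [hγ1def]; split
      · exact hdinv
      · rename_i h1
        have hr1p : 0 < r1 := lt_of_le_of_ne hr1 (Ne.symm h1)
        exact Real.sqrt_pos.mpr (div_pos hr0pos (mul_pos hr1p hT1))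
    have hγ2pos : 0 < γ2 := by
      rw [hγ2def]; split
      · exact hdinv
      · rename_i h2
        have hr2p : 0 < r2 := lt_of_le_of_ne hr2 (Ne.symm h2)
        exact Real.rpow_pos_of_pos (div_pos hr0pos (mul_pos hr2p hT1)) _
    have hγpos : 0 < γstar := by
      rw [hγstar]; exact lt_min hdinv (lt_min hγ1pos hγ2pos)
    -- claim A : r1 * γstar ≤ sqrt (r0*r1/(T+1))
    have claimA : r1 * γstar ≤ Real.sqrt (r0 * r1 / (T + 1)) := by
      by_cases h1 : r1 = 0
      · simpa [h1] using hBnn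
      · have hr1p : 0 < r1 := lt_of_le_of_ne hr1 (Ne.symm h1)
        have hγle : γstar ≤ Real.sqrt (r0 / (r1 * (T + 1))) := by
          rw [hγstar]
          refine le_trans (le_trans (min_le_right _ _) (min_le_left _ _)) ?_
          rw [hγ1def, if_neg h1]
        have key : r1 * Real.sqrt (r0 / (r1 * (T + 1))) = Real.sqrt (r0 * r1 / (T + 1)) := by
          rw [show r0 * r1 / (T + 1) = r1 ^ 2 * (r0 / (r1 * (T + 1))) by
            field_simp]
          rw [Real.sqrt_mul (sq_nonneg r1), Real.sqrt_sq hr1]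
        calc r1 * γstar ≤ r1 * Real.sqrt (r0 / (r1 * (T + 1))) := by
              exact mul_le_mul_of_nonneg_left hγle hr1
          _ = _ := key
    -- claim B : r2 * γstar^2 ≤ r2^{1/3} (r0/(T+1))^{2/3}
    have claimB : r2 * γstar ^ 2 ≤ r2 ^ ((1 : ℝ) / 3) * (r0 / (T + 1)) ^ ((2 : ℝ) / 3) := by
      by_cases h2 : r2 = 0
      · simpa [h2] using hCnn
      · have hr2p : 0 < r2 := lt_of_le_of_ne hr2 (Ne.symm h2)
        set x : ℝ := r0 / (r2 * (T + 1)) with hxdef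
        have hx : 0 < x := div_pos hr0pos (mul_pos hr2p hT1)
        set u : ℝ := x ^ ((1 : ℝ) / 3) with hudef
        have hu : 0 < u := Real.rpow_pos_of_pos hx _
        have hu3 : u ^ 3 = x := by
          rw [hudef, rpow_pow3 hx.le]; norm_num
        have hγle : γstar ≤ u := by
          rw [hγstar]
          refine le_trans (le_trans (min_le_right _ _) (min_le_right _ _)) ?_
          rw [hγ2def, if_neg h2]
        have key : r2 * u ^ 2 = r2 ^ ((1 : ℝ) / 3) * (r0 / (T + 1)) ^ ((2 : ℝ) / 3) := by
          apply eq_of_cube_eq (by positivity) (by positivity)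
          rw [mul_pow, mul_pow, rpow_pow3 hr2, rpow_pow3 (by positivity : (0:ℝ) ≤ r0 / (T+1)),
            show ((1:ℝ)/3) * 3 = (1:ℝ) by norm_num, Real.rpow_one,
            show ((2:ℝ)/3) * 3 = ((2:ℕ):ℝ) by norm_num, Real.rpow_natCast,
            show (u ^ 2) ^ 3 = (u ^ 3) ^ 2 from by ring, hu3, hxdef]
          field_simp
        calc r2 * γstar ^ 2 ≤ r2 * u ^ 2 :=
              mul_le_mul_of_nonneg_left (pow_le_pow_left₀ hγnn hγle 2) hr2
          _ = _ := key
    -- claim C : r0 / ((T+1) γstar) ≤ A + B + C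
    have claimC : r0 / ((T + 1) * γstar) ≤ d * r0 / (T + 1)
        + Real.sqrt (r0 * r1 / (T + 1)) + r2 ^ ((1 : ℝ) / 3) * (r0 / (T + 1)) ^ ((2 : ℝ) / 3) := by
      have base : r0 / ((T + 1) * (1 / d)) = d * r0 / (T + 1) := by
        field_simp
      have case1 : γstar = 1 / d →
          r0 / ((T + 1) * γstar) ≤ d * r0 / (T + 1)
            + Real.sqrt (r0 * r1 / (T + 1)) + r2 ^ ((1 : ℝ) / 3) * (r0 / (T + 1)) ^ ((2 : ℝ) / 3) := by
        intro he; rw [he, base]; linarith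
      rcases min_cases (1 / d) (min γ1 γ2) with ⟨he, _⟩ | ⟨he, _⟩
      · exact case1 (hγstar.trans he)
      · rcases min_cases γ1 γ2 with ⟨he2, _⟩ | ⟨he2, _⟩
        · -- γstar = γ1
          have hg : γstar = γ1 := hγstar.trans (he.trans he2)
          by_cases h1 : r1 = 0
          · exact case1 (by rw [hg, hγ1def, if_pos h1])
          · have hr1p : 0 < r1 := lt_of_le_of_ne hr1 (Ne.symm h1)
            have hx : 0 < r0 / (r1 * (T + 1)) := div_pos hr0pos (mul_pos hr1p hT1)
            have hs : 0 < Real.sqrt (r0 / (r1 * (T + 1))) := Real.sqrt_pos.mpr hx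
            have key : r0 / ((T + 1) * Real.sqrt (r0 / (r1 * (T + 1))))
                = Real.sqrt (r0 * r1 / (T + 1)) := by
              apply eq_of_sq_eq (by positivity) hBnn
              rw [div_pow, mul_pow, Real.sq_sqrt hx.le,
                Real.sq_sqrt (by positivity : (0:ℝ) ≤ r0 * r1 / (T + 1))]
              field_simp
            rw [hg, hγ1def, if_neg h1, key]
            linarith
        · -- γstar = γ2
          have hg : γstar = γ2 := hγstar.trans (he.trans he2)
          by_cases h2 : r2 = 0
          · exact case1 (by rw [hg, hγ2def, if_pos h2])
          · have hr2p : 0 < r2 := lt_of_le_of_ne hr2 (Ne.symm h2)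
            set x : ℝ := r0 / (r2 * (T + 1)) with hxdef
            have hx : 0 < x := div_pos hr0pos (mul_pos hr2p hT1)
            set u : ℝ := x ^ ((1 : ℝ) / 3) with hudef
            have hu : 0 < u := Real.rpow_pos_of_pos hx _
            have hu3 : u ^ 3 = x := by
              rw [hudef, rpow_pow3 hx.le]; norm_num
            have key : r0 / ((T + 1) * u)
                = r2 ^ ((1 : ℝ) / 3) * (r0 / (T + 1)) ^ ((2 : ℝ) / 3) := by
              apply eq_of_cube_eq (by positivity) hCnn
              rw [div_pow, mul_pow, hu3, mul_pow, rpow_pow3 hr2,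
                rpow_pow3 (by positivity : (0:ℝ) ≤ r0 / (T+1))]
              rw [show ((1:ℝ)/3) * 3 = (1:ℝ) by norm_num, Real.rpow_one]
              rw [show ((2:ℝ)/3) * 3 = (2:ℕ) by norm_num, Real.rpow_natCast]
              rw [hxdef]
              field_simp
            rw [hg, hγ2def, if_neg h2, key]
            linarith
    linarith
end
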